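/- arXiv:2508.18119 — 9 statements merged into one kernel-verified Lean document; each statement's English description precedes it below -/
import Mathlib

section
/- (Strict positivity of the Feynman–Hellmann derivative at the crossing) For every real number k > 0, one has ∫₁^∞ ( k·(r² − 1) − 1 )·r^{2k+1}·e^{−k·r²} dr > 0. -/
open MeasureTheory

/-- Strict positivity of the Feynman–Hellmann derivative at the crossing:
for every `k > 0`, `∫₁^∞ (k(r²−1) − 1)·r^{2k+1}·e^{−kr²} dr > 0`. -/
theorem feynman_hellmann_derivative_pos (k : ℝ) (hk : 0 < k) :
    0 < ∫ r in Set.Ioi (1:ℝ),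
        (k * (r ^ 2 - 1) - 1) * r ^ (2 * k + 1) * Real.exp (-k * r ^ 2) := by
  set f' : ℝ → ℝ := fun r => (k * (r ^ 2 - 1) - 1) * r ^ (2 * k + 1) * Real.exp (-k * r ^ 2)
    with hf'
  set F : ℝ → ℝ := fun r => -(1/2) * r ^ (2 * k + 2) * Real.exp (-k * r ^ 2) with hF
  have hderiv : ∀ r ∈ Set.Ici (1:ℝ), HasDerivAt F (f' r) r := by
    intro r hr
    have hr0 : (0:ℝ) < r := lt_of_lt_of_le one_pos hr
    have h1 : HasDerivAt (fun r : ℝ => r ^ (2 * k + 2)) ((2 * k + 2) * r ^ (2 * k + 2 - 1)) r :=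
      Real.hasDerivAt_rpow_const (Or.inl hr0.ne')
    have h2 : HasDerivAt (fun r : ℝ => Real.exp (-k * r ^ 2))
        (Real.exp (-k * r ^ 2) * (-k * (2 * r))) r := by
      have hq : HasDerivAt (fun r : ℝ => -k * r ^ 2) (-k * (2 * r)) r := by
        simpa using ((hasDerivAt_pow 2 r).const_mul (-k))
      exact hq.exp
    have h3 := (h1.const_mul (-(1/2:ℝ))).mul h2
    have key : f' r = -(1/2) * ((2 * k + 2) * r ^ (2 * k + 2 - 1)) * Real.exp (-k * r ^ 2) +
        -(1/2) * r ^ (2 * k + 2) * (Real.exp (-k * r ^ 2) * (-k * (2 * r))) := by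
      have e1 : (2 * k + 2 - 1 : ℝ) = 2 * k + 1 := by ring
      have hpow : r ^ (2 * k + 2) = r ^ (2 * k + 1) * r := by
        rw [← Real.rpow_add_one hr0.ne']; ring_nf
      rw [e1, hpow, hf']
      ring
    rw [key]
    exact h3
  -- integrability of f' on Ioi 1
  have hint : IntegrableOn f' (Set.Ioi (1:ℝ)) := by
    have i1 : IntegrableOn (fun r : ℝ => r ^ (2 * k + 3) * Real.exp (-k * r ^ 2))
        (Set.Ioi (1:ℝ)) :=
      (integrableOn_rpow_mul_exp_neg_mul_sq hk (by linarith)).mono_set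
        (Set.Ioi_subset_Ioi zero_le_one)
    have i2 : IntegrableOn (fun r : ℝ => r ^ (2 * k + 1) * Real.exp (-k * r ^ 2))
        (Set.Ioi (1:ℝ)) :=
      (integrableOn_rpow_mul_exp_neg_mul_sq hk (by linarith)).mono_set
        (Set.Ioi_subset_Ioi zero_le_one)
    have := ((i1.const_mul k).sub (i2.const_mul (k + 1)))
    refine MeasureTheory.IntegrableOn.congr_fun this (fun r hr => ?_) measurableSet_Ioi
    have hr0 : (0:ℝ) < r := lt_trans one_pos hr
    have hpow : r ^ (2 * k + 3) = r ^ (2 * k + 1) * r ^ 2 := by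
      rw [← Real.rpow_natCast r 2, ← Real.rpow_add hr0]
      norm_num
      congr 1
      ring
    simp only [hf', hpow, Pi.sub_apply]
    ring
  -- limit of F at infinity
  have hlim : Filter.Tendsto F Filter.atTop (nhds 0) := by
    have h0 : Filter.Tendsto (fun x : ℝ => x ^ (k + 1) * Real.exp (-k * x))
        Filter.atTop (nhds 0) := tendsto_rpow_mul_exp_neg_mul_atTop_nhds_zero (k + 1) k hk
    have hsq : Filter.Tendsto (fun r : ℝ => r ^ 2) Filter.atTop Filter.atTop := by
      exact Filter.tendsto_pow_atTop (by norm_num)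
    have := (h0.comp hsq).const_mul (-(1/2:ℝ))
    simp only [Function.comp] at this
    rw [mul_zero] at this
    apply this.congr'
    filter_upwards [Filter.eventually_gt_atTop (0:ℝ)] with r hr0
    simp only [hF]
    rw [← Real.rpow_natCast r 2, ← Real.rpow_mul hr0.le]
    ring_nf
  have heval : (∫ r in Set.Ioi (1:ℝ), f' r) = 0 - F 1 :=
    integral_Ioi_of_hasDerivAt_of_tendsto' hderiv hint hlim
  rw [hf'] at heval
  rw [heval]
  simp only [hF]
  have : (1:ℝ) ^ (2 * k + 2) = 1 := Real.one_rpow _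
  rw [this]
  norm_num
  positivity
end

section
/- (General solution of the fiber equation at energy b) Let b > 0, m ∈ ℤ and ν ∈ ℝ. A twice differentiable function u : (1,∞) → ℝ satisfies −u''(r) − u'(r)/r + ((m−ν)/r − b·r/2)²·u(r) = b·u(r) for all r > 1 if and only if there exist constants c₁, c₂ ∈ ℝ such that u(r) = r^{m−ν}·e^{−b·r²/4}·( c₁ + c₂·∫₁^r ρ^{−1−2(m−ν)}·e^{b·ρ²/2} dρ ) for all r > 1. -/
open Filter Topology Set

/-!
Write `μ = m - ν` and `L u = -u'' - u'/r + q u` with `q = (μ/r - br/2)² - b`, so that the equation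
reads `L u = 0`. The positive function `W(r) = r^μ e^{-br²/4}` (the lowest Landau level) solves it,
and the rest is reduction of order. By Lagrange's identity `(r (W u' - W' u))' = r (u L W - W L u)`,
`L u = 0` holds exactly when the radial Wronskian `r (W u' - W' u)` is a constant `C`. As
`(u / W)' = (W u' - W' u) / W²`, this means that `u / W - C V` is constant, where
`V' = 1 / (r W²) = r^{-1-2μ} e^{br²/2}` is the integrand of the statement. Conversely,
`u = W (c₁ + c₂ V)` has radial Wronskian `c₂`.
-/

noncomputable def radialOp (q u : ℝ → ℝ) (r : ℝ) : ℝ :=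
  -deriv (deriv u) r - deriv u r / r + q r * u r

noncomputable def radialWronskian (v u : ℝ → ℝ) (r : ℝ) : ℝ :=
  r * (v r * deriv u r - deriv v r * u r)

theorem hasDerivAt_radialWronskian (q : ℝ → ℝ) {v u : ℝ → ℝ} {r : ℝ} (hr : r ≠ 0)
    (hv : DifferentiableAt ℝ v r) (hv' : DifferentiableAt ℝ (deriv v) r)
    (hu : DifferentiableAt ℝ u r) (hu' : DifferentiableAt ℝ (deriv u) r) :
    HasDerivAt (radialWronskian v u) (r * (u r * radialOp q v r - v r * radialOp q u r)) r := by
  have h := (hasDerivAt_id r).mul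
    ((hv.hasDerivAt.mul hu'.hasDerivAt).sub (hv'.hasDerivAt.mul hu.hasDerivAt))
  refine h.congr_deriv ?_
  simp only [radialOp, id, Pi.mul_apply, Pi.sub_apply]
  field_simp
  ring

theorem exists_forall_Ioi_eq_of_hasDerivAt_zero {f : ℝ → ℝ} {a : ℝ}
    (hf : ∀ x > a, HasDerivAt f 0 x) : ∃ c, ∀ x > a, f x = c :=
  isOpen_Ioi.exists_is_const_of_deriv_eq_zero isPreconnected_Ioi
    (fun x hx => (hf x hx).differentiableAt.differentiableWithinAt) (fun x hx => (hf x hx).deriv)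

section ReductionOfOrder

variable {q W V u : ℝ → ℝ}
  (hW : ∀ r > 1, DifferentiableAt ℝ W r) (hW' : ∀ r > 1, DifferentiableAt ℝ (deriv W) r)
  (hW_pos : ∀ r > 1, 0 < W r) (hW_sol : ∀ r > 1, radialOp q W r = 0)
  (hV : ∀ r > 1, HasDerivAt V (r * W r ^ 2)⁻¹ r)
  (hu : ∀ r > 1, DifferentiableAt ℝ u r) (hu' : ∀ r > 1, DifferentiableAt ℝ (deriv u) r)
include hW hW' hW_pos hW_sol hV hu hu'

theorem exists_eq_mul_of_radialOp_eq_zero (hu_sol : ∀ r > 1, radialOp q u r = 0) :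
    ∃ c₁ c₂ : ℝ, ∀ r > 1, u r = W r * (c₁ + c₂ * V r) := by
  obtain ⟨C, hC⟩ := exists_forall_Ioi_eq_of_hasDerivAt_zero (f := radialWronskian W u)
    fun r hr => by
      simpa [hW_sol r hr, hu_sol r hr] using hasDerivAt_radialWronskian q
        (by positivity) (hW r hr) (hW' r hr) (hu r hr) (hu' r hr)
  have hquot : ∀ r > 1, HasDerivAt (fun x => u x / W x - C * V x) 0 r := by
    intro r hr
    have hr0 : (0:ℝ) < r := by linarith
    have hWr := (hW_pos r hr).ne'
    refine (((hu r hr).hasDerivAt.div (hW r hr).hasDerivAt hWr).sub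
      ((hV r hr).const_mul C)).congr_deriv ?_
    rw [← hC r hr, radialWronskian]
    field_simp
    ring
  obtain ⟨c₁, hc₁⟩ := exists_forall_Ioi_eq_of_hasDerivAt_zero hquot
  refine ⟨c₁, C, fun r hr => ?_⟩
  have := hc₁ r hr
  have hWr := (hW_pos r hr).ne'
  field_simp at this
  linarith

theorem radialOp_eq_zero_of_eq_mul {c₁ c₂ : ℝ} (h : ∀ r > 1, u r = W r * (c₁ + c₂ * V r)) :
    ∀ r > 1, radialOp q u r = 0 := by
  have hwr : ∀ x > 1, radialWronskian W u x = c₂ := by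
    intro x hx
    have hux : u =ᶠ[𝓝 x] fun y => W y * (c₁ + c₂ * V y) := eventually_of_mem (Ioi_mem_nhds hx) h
    have hderiv : deriv u x = deriv W x * (c₁ + c₂ * V x) + W x * (c₂ * (x * W x ^ 2)⁻¹) := by
      rw [hux.deriv_eq]
      exact ((hW x hx).hasDerivAt.mul (((hV x hx).const_mul c₂).const_add c₁)).deriv
    have hx0 : x ≠ 0 := by positivity
    have hWx := (hW_pos x hx).ne'
    rw [radialWronskian, hderiv, h x hx]
    field_simp
    ring
  intro r hr
  have h0 : HasDerivAt (radialWronskian W u) 0 r :=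
    (hasDerivAt_const r c₂).congr_of_eventuallyEq (eventually_of_mem (Ioi_mem_nhds hr) hwr)
  have := (hasDerivAt_radialWronskian q (by positivity) (hW r hr) (hW' r hr) (hu r hr)
    (hu' r hr)).unique h0
  simpa [hW_sol r hr, (hW_pos r hr).ne', (show r ≠ 0 by positivity)] using this

theorem radialOp_eq_zero_iff_exists_eq_mul :
    (∀ r > 1, radialOp q u r = 0) ↔ ∃ c₁ c₂ : ℝ, ∀ r > 1, u r = W r * (c₁ + c₂ * V r) :=
  ⟨exists_eq_mul_of_radialOp_eq_zero hW hW' hW_pos hW_sol hV hu hu',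
    fun ⟨_, _, h⟩ => radialOp_eq_zero_of_eq_mul hW hW' hW_pos hW_sol hV hu hu' h⟩

end ReductionOfOrder

noncomputable def fiberGroundState (b μ r : ℝ) : ℝ := r ^ μ * Real.exp (-b * r ^ 2 / 4)

section FiberGroundState

variable (b μ : ℝ) {r : ℝ}

theorem fiberGroundState_pos (hr : 0 < r) : 0 < fiberGroundState b μ r := by
  unfold fiberGroundState
  positivity

theorem hasDerivAt_fiberGroundState (hr : 0 < r) :
    HasDerivAt (fiberGroundState b μ) ((μ / r - b * r / 2) * fiberGroundState b μ r) r := by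
  have hpow := Real.hasDerivAt_rpow_const (p := μ) (Or.inl hr.ne')
  have hgauss : HasDerivAt (fun x : ℝ => -b * x ^ 2 / 4) (-b * (2 * r) / 4) r := by
    simpa using ((hasDerivAt_pow 2 r).const_mul (-b)).div_const 4
  refine (hpow.mul hgauss.exp).congr_deriv ?_
  rw [fiberGroundState, Real.rpow_sub hr, Real.rpow_one]
  field_simp
  ring

theorem hasDerivAt_deriv_fiberGroundState (hr : 0 < r) :
    HasDerivAt (deriv (fiberGroundState b μ))
      ((-μ / r ^ 2 - b / 2) * fiberGroundState b μ r
        + (μ / r - b * r / 2) * ((μ / r - b * r / 2) * fiberGroundState b μ r)) r := by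
  have hlog : HasDerivAt (fun x => μ / x - b * x / 2) (-μ / r ^ 2 - b / 2) r := by
    refine (((hasDerivAt_inv hr.ne').const_mul μ).sub
      (((hasDerivAt_id r).const_mul b).div_const 2)).congr_deriv ?_
    field_simp
  have hderiv : deriv (fiberGroundState b μ) =ᶠ[𝓝 r]
      fun x => (μ / x - b * x / 2) * fiberGroundState b μ x :=
    eventually_of_mem (Ioi_mem_nhds hr) fun _ hx => (hasDerivAt_fiberGroundState b μ hx).deriv
  exact (hlog.mul (hasDerivAt_fiberGroundState b μ hr)).congr_of_eventuallyEq hderiv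

theorem radialOp_fiberGroundState (hr : 0 < r) :
    radialOp (fun x => (μ / x - b * x / 2) ^ 2 - b) (fiberGroundState b μ) r = 0 := by
  rw [radialOp, (hasDerivAt_deriv_fiberGroundState b μ hr).deriv,
    (hasDerivAt_fiberGroundState b μ hr).deriv]
  field_simp
  ring

theorem fiberIntegrand_eq (hr : 0 < r) :
    r ^ (-1 - 2 * μ) * Real.exp (b * r ^ 2 / 2) = (r * fiberGroundState b μ r ^ 2)⁻¹ := by
  refine eq_inv_of_mul_eq_one_left ?_
  have hpow : r ^ (-1 - 2 * μ) * r ^ μ * r ^ μ * r = 1 := by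
    rw [← Real.rpow_add hr, ← Real.rpow_add hr, show -1 - 2 * μ + μ + μ = (-1 : ℝ) by ring,
      Real.rpow_neg_one, inv_mul_cancel₀ hr.ne']
  have hexp :
      Real.exp (b * r ^ 2 / 2) * Real.exp (-b * r ^ 2 / 4) * Real.exp (-b * r ^ 2 / 4) = 1 := by
    rw [← Real.exp_add, ← Real.exp_add, ← Real.exp_zero]
    ring_nf
  calc r ^ (-1 - 2 * μ) * Real.exp (b * r ^ 2 / 2) * (r * fiberGroundState b μ r ^ 2)
      = (r ^ (-1 - 2 * μ) * r ^ μ * r ^ μ * r) *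
        (Real.exp (b * r ^ 2 / 2) * Real.exp (-b * r ^ 2 / 4) * Real.exp (-b * r ^ 2 / 4)) := by
        rw [fiberGroundState]; ring
    _ = 1 := by rw [hpow, hexp, mul_one]

theorem hasDerivAt_integral_fiberIntegrand (hr : 0 < r) :
    HasDerivAt (fun x => ∫ ρ in (1:ℝ)..x, ρ ^ (-1 - 2 * μ) * Real.exp (b * ρ ^ 2 / 2))
      (r * fiberGroundState b μ r ^ 2)⁻¹ r := by
  have hcont : ContinuousOn (fun ρ : ℝ => ρ ^ (-1 - 2 * μ) * Real.exp (b * ρ ^ 2 / 2)) (Ioi 0) :=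
    fun x hx => ((Real.continuousAt_rpow_const _ _ (Or.inl (ne_of_gt hx))).mul
      (by fun_prop)).continuousWithinAt
  rw [← fiberIntegrand_eq b μ hr]
  refine intervalIntegral.integral_hasDerivAt_right ((hcont.mono ?_).intervalIntegrable)
    (hcont.stronglyMeasurableAtFilter isOpen_Ioi r hr) (hcont.continuousAt (Ioi_mem_nhds hr))
  exact fun x hx => lt_of_lt_of_le (lt_min one_pos hr) hx.1

end FiberGroundState

theorem fiber_general_solution_general
    (b : ℝ) (m : ℤ) (ν : ℝ) (u : ℝ → ℝ)
    (hu1 : ∀ r > (1:ℝ), DifferentiableAt ℝ u r)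
    (hu2 : ∀ r > (1:ℝ), DifferentiableAt ℝ (deriv u) r) :
    (∀ r > (1:ℝ), -(deriv (deriv u) r) - deriv u r / r
        + (((m : ℝ) - ν) / r - b * r / 2) ^ 2 * u r = b * u r) ↔
    (∃ c₁ c₂ : ℝ, ∀ r > (1:ℝ),
      u r = r ^ ((m : ℝ) - ν) * Real.exp (-b * r ^ 2 / 4) *
        (c₁ + c₂ * ∫ ρ in (1:ℝ)..r,
          ρ ^ (-1 - 2 * ((m : ℝ) - ν)) * Real.exp (b * ρ ^ 2 / 2))) := by
  set μ := (m : ℝ) - ν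
  have hode : ∀ r > (1:ℝ), (-(deriv (deriv u) r) - deriv u r / r
      + (μ / r - b * r / 2) ^ 2 * u r = b * u r) ↔
      radialOp (fun x => (μ / x - b * x / 2) ^ 2 - b) u r = 0 := fun r _ => by
    rw [radialOp]
    constructor <;> intro h <;> linarith
  have hpos : ∀ r > (1:ℝ), 0 < r := fun r hr => by linarith
  rw [forall₂_congr hode]
  exact radialOp_eq_zero_iff_exists_eq_mul
    (fun r hr => (hasDerivAt_fiberGroundState b μ (hpos r hr)).differentiableAt)
    (fun r hr => (hasDerivAt_deriv_fiberGroundState b μ (hpos r hr)).differentiableAt)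
    (fun r hr => fiberGroundState_pos b μ (hpos r hr))
    (fun r hr => radialOp_fiberGroundState b μ (hpos r hr))
    (fun r hr => hasDerivAt_integral_fiberIntegrand b μ (hpos r hr)) hu1 hu2

/-- General solution of the fiber equation at energy `b`: a twice differentiable function
`u` on `(1,∞)` solves the fiber ODE at energy `b` iff
`u(r) = r^{m−ν}·e^{−br²/4}·(c₁ + c₂·∫₁^r ρ^{−1−2(m−ν)}·e^{bρ²/2} dρ)` for some `c₁, c₂`. -/
theorem fiber_general_solution
    (b : ℝ) (hb : 0 < b) (m : ℤ) (ν : ℝ) (u : ℝ → ℝ)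
    (hu1 : ∀ r > (1:ℝ), DifferentiableAt ℝ u r)
    (hu2 : ∀ r > (1:ℝ), DifferentiableAt ℝ (deriv u) r) :
    (∀ r > (1:ℝ), -(deriv (deriv u) r) - deriv u r / r
        + (((m : ℝ) - ν) / r - b * r / 2) ^ 2 * u r = b * u r) ↔
    (∃ c₁ c₂ : ℝ, ∀ r > (1:ℝ),
      u r = r ^ ((m : ℝ) - ν) * Real.exp (-b * r ^ 2 / 4) *
        (c₁ + c₂ * ∫ ρ in (1:ℝ)..r,
          ρ ^ (-1 - 2 * ((m : ℝ) - ν)) * Real.exp (b * ρ ^ 2 / 2))) :=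
  fiber_general_solution_general b m ν u hu1 hu2
end

section
/- (Square-integrability dichotomy for the fiber solutions) Let b > 0, m ∈ ℤ, ν ∈ ℝ and c₁, c₂ ∈ ℝ with (c₁, c₂) ≠ (0,0). Define u(r) = r^{m−ν}·e^{−b·r²/4}·( c₁ + c₂·∫₁^r ρ^{−1−2(m−ν)}·e^{b·ρ²/2} dρ ) for r > 1. Then ∫₁^∞ u(r)²·r dr < ∞ if and only if c₂ = 0. -/
/-!
If `c₂ = 0`, then `u(r)² r = c₁² r^{2α+1} e^{-br²/2}` (with `α = m - ν`) decays like a Gaussian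
and is integrable. If `c₂ ≠ 0`, the integral grows like `e^{br²/2}` up to a power of `r`: on
`[r - 1, r]` its integrand is at least `r^{-|s|} e^{b(r-1)²/2}`, where `s = -1 - 2α`. Hence
`|u(r)| ≳ r^{α-|s|} e^{br²/4 - br} → ∞`, and a function that tends to infinity is not integrable
on a half-line.
-/

open MeasureTheory Filter Real Set

noncomputable def fiberSolution (b α c₁ c₂ r : ℝ) : ℝ :=
  r ^ α * exp (-b * r ^ 2 / 4) *
    (c₁ + c₂ * ∫ ρ in (1:ℝ)..r, ρ ^ (-1 - 2 * α) * exp (b * ρ ^ 2 / 2))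

theorem tendsto_rpow_mul_exp_atTop (t : ℝ) : Tendsto (fun r : ℝ => r ^ t * exp r) atTop atTop := by
  refine (tendsto_exp_div_rpow_atTop (-t)).congr' ?_
  filter_upwards [eventually_gt_atTop 0] with r hr
  rw [rpow_neg hr.le, div_inv_eq_mul, mul_comm]

theorem eventually_le_quadratic {c : ℝ} (hc : 0 < c) (d e : ℝ) :
    ∀ᶠ r : ℝ in atTop, r ≤ c * r ^ 2 + d * r + e := by
  filter_upwards [eventually_ge_atTop ((1 + |d| + |e|) / c), eventually_ge_atTop 1]
    with r hcr hr
  have hcr : 1 + |d| + |e| ≤ c * r := (div_le_iff₀' hc).1 hcr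
  nlinarith [neg_abs_le d, neg_abs_le e, abs_nonneg e]

theorem tendsto_rpow_mul_exp_quadratic_atTop {c : ℝ} (hc : 0 < c) (t d e : ℝ) :
    Tendsto (fun r : ℝ => r ^ t * exp (c * r ^ 2 + d * r + e)) atTop atTop := by
  refine tendsto_atTop_mono' _ ?_ (tendsto_rpow_mul_exp_atTop t)
  filter_upwards [eventually_le_quadratic hc d e, eventually_gt_atTop 0] with r hq hr
  gcongr

theorem not_integrableOn_Ioi_of_tendsto_atTop {f : ℝ → ℝ} (a : ℝ)
    (hf : Tendsto f atTop atTop) : ¬ IntegrableOn f (Ioi a) := by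
  intro h
  obtain ⟨R, hR⟩ := (hf.eventually_ge_atTop 1).exists_forall_of_atTop
  have hsub : Ioi (max a R) ⊆ {x | 1 ≤ ‖f x‖} ∩ Ioi a := fun x hx =>
    ⟨(hR x ((le_max_right a R).trans hx.le)).trans (le_norm_self (f x)),
      (le_max_left a R).trans_lt hx⟩
  have := (measure_mono hsub).trans (Measure.le_restrict_apply _ _) |>.trans_lt
    (h.measure_norm_ge_lt_top one_pos)
  simp only [Real.volume_Ioi, lt_self_iff_false] at this

theorem integrableOn_Ioi_one_rpow_mul_exp_neg_mul_sq {b : ℝ} (hb : 0 < b) (t : ℝ) :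
    IntegrableOn (fun r : ℝ => r ^ t * exp (-b * r ^ 2)) (Ioi 1) := by
  refine Integrable.mono' ((integrableOn_rpow_mul_exp_neg_mul_sq hb
    (neg_one_lt_zero.trans_le (le_max_right t 0))).mono_set (Ioi_subset_Ioi zero_le_one))
    (by fun_prop) ?_
  filter_upwards [ae_restrict_mem measurableSet_Ioi] with r hr
  have hr : 1 ≤ r := le_of_lt hr
  rw [norm_of_nonneg (by positivity)]
  gcongr
  exact le_max_left t 0

theorem integrableOn_sq_fiberSolution_mul_of_eq_zero {b : ℝ} (hb : 0 < b) (α c₁ : ℝ) :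
    IntegrableOn (fun r => fiberSolution b α c₁ 0 r ^ 2 * r) (Ioi 1) := by
  refine IntegrableOn.congr_fun
    ((integrableOn_Ioi_one_rpow_mul_exp_neg_mul_sq (half_pos hb) (2 * α + 1)).const_mul (c₁ ^ 2))
    (fun r hr => ?_) measurableSet_Ioi
  have hr : 0 < r := zero_lt_one.trans hr
  rw [fiberSolution, rpow_add hr, rpow_one, two_mul, rpow_add hr,
    show -(b / 2) * r ^ 2 = -b * r ^ 2 / 4 + -b * r ^ 2 / 4 by ring, exp_add]
  ring

theorem rpow_mul_exp_le_integral {b : ℝ} (hb : 0 ≤ b) (s : ℝ) {r : ℝ} (hr : 2 ≤ r) :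
    r ^ (-|s|) * exp (b * (r - 1) ^ 2 / 2) ≤ ∫ ρ in (1:ℝ)..r, ρ ^ s * exp (b * ρ ^ 2 / 2) := by
  have hint : ∀ x y : ℝ, 1 ≤ x → x ≤ y →
      IntervalIntegrable (fun ρ : ℝ => ρ ^ s * exp (b * ρ ^ 2 / 2)) volume x y := by
    intro x y hx hxy
    refine ContinuousOn.intervalIntegrable fun ρ hρ => ContinuousAt.continuousWithinAt ?_
    rw [uIcc_of_le hxy] at hρ
    exact (continuousAt_rpow_const _ _ (Or.inl (by linarith [hρ.1]))).mul (by fun_prop)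
  rw [← intervalIntegral.integral_add_adjacent_intervals (hint 1 (r - 1) le_rfl (by linarith))
    (hint (r - 1) r (by linarith) (by linarith))]
  have hhead : 0 ≤ ∫ ρ in (1:ℝ)..(r - 1), ρ ^ s * exp (b * ρ ^ 2 / 2) :=
    intervalIntegral.integral_nonneg (by linarith) fun ρ hρ =>
      mul_nonneg (rpow_nonneg (by linarith [hρ.1]) s) (exp_pos _).le
  have htail : r ^ (-|s|) * exp (b * (r - 1) ^ 2 / 2)
      ≤ ∫ ρ in (r - 1)..r, ρ ^ s * exp (b * ρ ^ 2 / 2) := by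
    calc r ^ (-|s|) * exp (b * (r - 1) ^ 2 / 2)
        = ∫ _ in (r - 1)..r, r ^ (-|s|) * exp (b * (r - 1) ^ 2 / 2) := by simp
      _ ≤ _ := by
        refine intervalIntegral.integral_mono_on (by linarith) intervalIntegrable_const
          (hint (r - 1) r (by linarith) (by linarith)) fun ρ ⟨hρ, hρr⟩ => ?_
        have hρ1 : 1 ≤ ρ := by linarith
        have hpow : r ^ (-|s|) ≤ ρ ^ s :=
          (rpow_le_rpow_of_nonpos (by linarith) hρr (neg_nonpos.2 (abs_nonneg s))).trans
            (rpow_le_rpow_of_exponent_le hρ1 (neg_abs_le s))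
        have hexp : exp (b * (r - 1) ^ 2 / 2) ≤ exp (b * ρ ^ 2 / 2) := by
          gcongr
          linarith
        exact mul_le_mul hpow hexp (exp_pos _).le (rpow_nonneg (by linarith) s)
  linarith

theorem tendsto_abs_fiberSolution_atTop {b : ℝ} (hb : 0 < b) (α c₁ : ℝ) {c₂ : ℝ}
    (hc₂ : c₂ ≠ 0) : Tendsto (fun r => |fiberSolution b α c₁ c₂ r|) atTop atTop := by
  set s := -1 - 2 * α
  set I := fun r : ℝ => ∫ ρ in (1:ℝ)..r, ρ ^ s * exp (b * ρ ^ 2 / 2)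
  set L := fun r : ℝ => r ^ (-|s|) * exp (b * (r - 1) ^ 2 / 2)
  have hL : Tendsto L atTop atTop := by
    refine (tendsto_rpow_mul_exp_quadratic_atTop (half_pos hb) (-|s|) (-b) (b / 2)).congr
      fun r => ?_
    simp only [L]
    ring_nf
  have hwL : Tendsto (fun r => r ^ α * exp (-b * r ^ 2 / 4) * L r) atTop atTop := by
    refine (tendsto_rpow_mul_exp_quadratic_atTop (by positivity : 0 < b / 4) (α + -|s|) (-b)
      (b / 2)).congr' ?_
    filter_upwards [eventually_gt_atTop 0] with r hr
    rw [rpow_add hr, show b / 4 * r ^ 2 + -b * r + b / 2 = -b * r ^ 2 / 4 + b * (r - 1) ^ 2 / 2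
      by ring, exp_add]
    ring
  refine tendsto_atTop_mono' _ ?_ (hwL.const_mul_atTop (half_pos (abs_pos.2 hc₂)))
  filter_upwards [eventually_ge_atTop 2, hL.eventually_ge_atTop (2 * |c₁| / |c₂|)]
    with r hr hLr
  have hLr : 2 * |c₁| ≤ |c₂| * L r := (div_le_iff₀' (abs_pos.2 hc₂)).1 hLr
  have hLI : |c₂| * L r ≤ |c₂ * I r| := by
    rw [abs_mul]
    exact mul_le_mul_of_nonneg_left
      ((rpow_mul_exp_le_integral hb.le s hr).trans (le_abs_self _)) (abs_nonneg c₂)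
  have hsum : |c₂| / 2 * L r ≤ |c₁ + c₂ * I r| := by
    have := abs_sub_abs_le_abs_sub (c₂ * I r) (-c₁)
    rw [abs_neg, sub_neg_eq_add, add_comm] at this
    linarith
  have hw : 0 < r ^ α * exp (-b * r ^ 2 / 4) := by positivity
  calc |c₂| / 2 * (r ^ α * exp (-b * r ^ 2 / 4) * L r)
      = r ^ α * exp (-b * r ^ 2 / 4) * (|c₂| / 2 * L r) := by ring
    _ ≤ r ^ α * exp (-b * r ^ 2 / 4) * |c₁ + c₂ * I r| := by gcongr
    _ = |fiberSolution b α c₁ c₂ r| := by rw [fiberSolution, abs_mul, abs_of_pos hw]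

theorem fiber_solution_square_integrable_iff_general
    (b : ℝ) (hb : 0 < b) (m : ℤ) (ν : ℝ) (c₁ c₂ : ℝ) :
    IntegrableOn
      (fun r : ℝ =>
        (r ^ ((m : ℝ) - ν) * Real.exp (-b * r ^ 2 / 4) *
          (c₁ + c₂ * ∫ ρ in (1:ℝ)..r,
            ρ ^ (-1 - 2 * ((m : ℝ) - ν)) * Real.exp (b * ρ ^ 2 / 2))) ^ 2 * r)
      (Set.Ioi 1) ↔
    c₂ = 0 := by
  change IntegrableOn (fun r => fiberSolution b (m - ν) c₁ c₂ r ^ 2 * r) (Ioi 1) ↔ c₂ = 0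
  refine ⟨fun h => ?_, fun h => h ▸ integrableOn_sq_fiberSolution_mul_of_eq_zero hb _ _⟩
  by_contra hc₂
  have hu := tendsto_abs_fiberSolution_atTop hb (m - ν) c₁ hc₂
  refine not_integrableOn_Ioi_of_tendsto_atTop 1 (tendsto_atTop_mono' _ ?_ hu) h
  filter_upwards [hu.eventually_ge_atTop 1, eventually_ge_atTop 1] with r hu1 hr1
  calc |fiberSolution b (m - ν) c₁ c₂ r| ≤ |fiberSolution b (m - ν) c₁ c₂ r| ^ 2 :=
      le_self_pow₀ hu1 two_ne_zero
    _ = fiberSolution b (m - ν) c₁ c₂ r ^ 2 := sq_abs _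
    _ ≤ fiberSolution b (m - ν) c₁ c₂ r ^ 2 * r := le_mul_of_one_le_right (sq_nonneg _) hr1

/-- Square-integrability dichotomy for the fiber solutions: the explicit solution
`u(r) = r^{m−ν}·e^{−br²/4}·(c₁ + c₂·∫₁^r ρ^{−1−2(m−ν)}·e^{bρ²/2} dρ)` with `(c₁,c₂) ≠ (0,0)`
lies in `L²((1,∞), r dr)` iff `c₂ = 0`. -/
theorem fiber_solution_square_integrable_iff
    (b : ℝ) (hb : 0 < b) (m : ℤ) (ν : ℝ) (c₁ c₂ : ℝ) (hc : (c₁, c₂) ≠ (0, 0)) :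
    IntegrableOn
      (fun r : ℝ =>
        (r ^ ((m : ℝ) - ν) * Real.exp (-b * r ^ 2 / 4) *
          (c₁ + c₂ * ∫ ρ in (1:ℝ)..r,
            ρ ^ (-1 - 2 * ((m : ℝ) - ν)) * Real.exp (b * ρ ^ 2 / 2))) ^ 2 * r)
      (Set.Ioi 1) ↔
    c₂ = 0 :=
  fiber_solution_square_integrable_iff_general b hb m ν c₁ c₂
end

section
/- (Quasi-mode identity in the weak-field regime) Let b > 0, m ∈ ℤ and ν ∈ (−1/2, 1/2] with a := m − ν > 0. Define χ(r) = 1 + ((a − b/2)/(a + b/2))·r^{−2a}, f(r) = r^{a}·e^{−b·r²/4}, and Ψ = χ·f on [1,∞). Then Ψ'(1) = 0, and for every r > 1, −Ψ''(r) − Ψ'(r)/r + (a/r − b·r/2)²·Ψ(r) − b·Ψ(r) = b·r·χ'(r)·f(r). -/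
/-!
Write `g(r) = a/r − b r/2`. Then `f' = g f`, and since `g' + g/r + b = 0`, `f` solves
`−f'' − f'/r + g² f = b f`: it is an exact eigenfunction of the whole-plane fiber operator.
Conjugating by `f` therefore turns `(𝓛 − b)(χ f)` into `f · (−χ'' − (2a + 1 − b r²) χ'/r)`,
and `χ = 1 + c r^{−2a}` solves the Euler equation `χ'' + (2a + 1) χ'/r = 0`, leaving `b r χ' f`.
The constant `c` is the one making `Ψ'(1) = (χ'(1) + χ(1) g(1)) f(1)` vanish.
-/

open Filter Topology

section ProductWithLogDeriv

variable {χ f g dχ d2χ dg : ℝ → ℝ}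

theorem hasDerivAt_mul_of_hasDerivAt_eq_mul {x χ' l : ℝ} (hχ : HasDerivAt χ χ' x)
    (hf : HasDerivAt f (l * f x) x) :
    HasDerivAt (fun y => χ y * f y) ((χ' + χ x * l) * f x) x :=
  (hχ.mul hf).congr_deriv (by ring)

theorem deriv_deriv_mul_of_hasDerivAt_eq_mul {s : Set ℝ} (hs : IsOpen s)
    (hχ : ∀ x ∈ s, HasDerivAt χ (dχ x) x) (hdχ : ∀ x ∈ s, HasDerivAt dχ (d2χ x) x)
    (hf : ∀ x ∈ s, HasDerivAt f (g x * f x) x) (hg : ∀ x ∈ s, HasDerivAt g (dg x) x)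
    {x : ℝ} (hx : x ∈ s) :
    deriv (deriv fun y => χ y * f y) x
      = (d2χ x + 2 * dχ x * g x + χ x * (dg x + g x ^ 2)) * f x := by
  have hderiv : deriv (fun y => χ y * f y) =ᶠ[𝓝 x] fun y => (dχ y + χ y * g y) * f y :=
    eventually_of_mem (hs.mem_nhds hx) fun y hy =>
      (hasDerivAt_mul_of_hasDerivAt_eq_mul (hχ y hy) (hf y hy)).deriv
  rw [hderiv.deriv_eq]
  refine ((((hdχ x hx).add ((hχ x hx).mul (hg x hx))).mul (hf x hx)).congr_deriv ?_).deriv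
  simp only [Pi.add_apply, Pi.mul_apply]
  ring

end ProductWithLogDeriv

theorem hasDerivAt_div_sub_mul {a b x : ℝ} (hx : x ≠ 0) :
    HasDerivAt (fun r => a / r - b * r / 2) (-a / x ^ 2 - b / 2) x := by
  simp only [div_eq_mul_inv]
  exact (((hasDerivAt_inv hx).const_mul a).sub
    (((hasDerivAt_id x).const_mul b).mul_const 2⁻¹)).congr_deriv (by ring)

theorem hasDerivAt_rpow_mul_exp_neg_sq {a b x : ℝ} (hx : 0 < x) :
    HasDerivAt (fun r => r ^ a * Real.exp (-b * r ^ 2 / 4))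
      ((a / x - b * x / 2) * (x ^ a * Real.exp (-b * x ^ 2 / 4))) x := by
  have hquad : HasDerivAt (fun r : ℝ => -b * r ^ 2 / 4) (-b * x / 2) x :=
    (((hasDerivAt_pow 2 x).const_mul (-b)).div_const 4).congr_deriv (by ring)
  refine ((Real.hasDerivAt_rpow_const (Or.inl hx.ne')).mul hquad.exp).congr_deriv ?_
  rw [Real.rpow_sub_one hx.ne']
  field_simp
  ring

theorem hasDerivAt_one_add_mul_rpow {c p x : ℝ} (hx : x ≠ 0) :
    HasDerivAt (fun r => 1 + c * r ^ p) (c * p * x ^ (p - 1)) x :=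
  (((Real.hasDerivAt_rpow_const (Or.inl hx)).const_mul c).const_add 1).congr_deriv (by ring)

/-- The Euler equation `χ'' = (p - 1) χ' / r` of `χ = 1 + c r^p`, in terms of `χ'`. -/
theorem hasDerivAt_mul_rpow_sub_one {c p x : ℝ} (hx : x ≠ 0) :
    HasDerivAt (fun r => c * p * r ^ (p - 1)) ((p - 1) / x * (c * p * x ^ (p - 1))) x := by
  refine ((Real.hasDerivAt_rpow_const (Or.inl hx)).const_mul (c * p)).congr_deriv ?_
  rw [Real.rpow_sub_one hx (p - 1)]
  field_simp

theorem radial_identity_of_euler {a b x χ dχ d2χ f : ℝ} (hx : x ≠ 0)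
    (hd2χ : d2χ = (-(2 * a) - 1) / x * dχ) :
    -((d2χ + 2 * dχ * (a / x - b * x / 2)
          + χ * ((-a / x ^ 2 - b / 2) + (a / x - b * x / 2) ^ 2)) * f)
        - (dχ + χ * (a / x - b * x / 2)) * f / x
        + (a / x - b * x / 2) ^ 2 * (χ * f) - b * (χ * f) = b * x * dχ * f := by
  subst hd2χ
  field_simp
  ring

theorem quasi_mode_identity_general
    (b : ℝ) (hb : 0 < b)
    (a : ℝ) (ha : 0 < a)
    (χ f Ψ : ℝ → ℝ)
    (hχ : ∀ r, χ r = 1 + (a - b / 2) / (a + b / 2) * r ^ (-(2 * a)))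
    (hf : ∀ r, f r = r ^ a * Real.exp (-b * r ^ 2 / 4))
    (hΨ : ∀ r, Ψ r = χ r * f r) :
    deriv Ψ 1 = 0 ∧
    ∀ r > (1:ℝ),
      -(deriv (deriv Ψ) r) - deriv Ψ r / r + (a / r - b * r / 2) ^ 2 * Ψ r - b * Ψ r
        = b * r * deriv χ r * f r := by
  set c := (a - b / 2) / (a + b / 2)
  have hχ' (x : ℝ) (hx : x ∈ Set.Ioi 0) :
      HasDerivAt χ (c * -(2 * a) * x ^ (-(2 * a) - 1)) x := by
    rw [funext hχ]
    exact hasDerivAt_one_add_mul_rpow (ne_of_gt hx)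
  have hf' (x : ℝ) (hx : x ∈ Set.Ioi 0) : HasDerivAt f ((a / x - b * x / 2) * f x) x := by
    rw [funext hf]
    exact hasDerivAt_rpow_mul_exp_neg_sq hx
  obtain rfl : Ψ = fun r => χ r * f r := funext hΨ
  have hΨ' (x : ℝ) (hx : x ∈ Set.Ioi 0) :=
    hasDerivAt_mul_of_hasDerivAt_eq_mul (hχ' x hx) (hf' x hx)
  constructor
  · have hneumann : c * -(2 * a) + (1 + c) * (a - b / 2) = 0 := by
      have : a + b / 2 ≠ 0 := by positivity
      simp only [c]
      field_simp
      ring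
    rw [(hΨ' 1 (Set.mem_Ioi.2 one_pos)).deriv, hχ 1]
    simp only [Real.one_rpow, mul_one, div_one]
    rw [hneumann, zero_mul]
  · intro r hr
    have hr0 : r ∈ Set.Ioi 0 := lt_trans one_pos hr
    rw [deriv_deriv_mul_of_hasDerivAt_eq_mul (g := fun x => a / x - b * x / 2)
        (dχ := fun x => c * -(2 * a) * x ^ (-(2 * a) - 1)) isOpen_Ioi hχ'
        (fun x hx => hasDerivAt_mul_rpow_sub_one (ne_of_gt hx)) hf'
        (fun x hx => hasDerivAt_div_sub_mul (ne_of_gt hx)) hr0,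
      (hΨ' r hr0).deriv, (hχ' r hr0).deriv]
    exact radial_identity_of_euler (ne_of_gt hr0) rfl

/-- Quasi-mode identity in the weak-field regime: with `a = m − ν > 0`,
`χ(r) = 1 + ((a − b/2)/(a + b/2))·r^{−2a}`, `f(r) = r^a e^{−br²/4}` and `Ψ = χ f`,
one has `Ψ'(1) = 0` and `(𝓛^{(m)} − b)Ψ = b·r·χ'·f` on `(1,∞)`. -/
theorem quasi_mode_identity
    (b : ℝ) (hb : 0 < b) (m : ℤ) (ν : ℝ) (hν : ν ∈ Set.Ioc (-(1:ℝ)/2) (1/2))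
    (a : ℝ) (ha_def : a = (m : ℝ) - ν) (ha : 0 < a)
    (χ f Ψ : ℝ → ℝ)
    (hχ : ∀ r, χ r = 1 + (a - b / 2) / (a + b / 2) * r ^ (-(2 * a)))
    (hf : ∀ r, f r = r ^ a * Real.exp (-b * r ^ 2 / 4))
    (hΨ : ∀ r, Ψ r = χ r * f r) :
    deriv Ψ 1 = 0 ∧
    ∀ r > (1:ℝ),
      -(deriv (deriv Ψ) r) - deriv Ψ r / r + (a / r - b * r / 2) ^ 2 * Ψ r - b * Ψ r
        = b * r * deriv χ r * f r :=
  quasi_mode_identity_general b hb a ha χ f Ψ hχ hf hΨ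
end

section
/- (Norm asymptotics of the quasi-mode as b → 0⁺) Let m ≥ 1 be an integer, ν ∈ (−1/2, 1/2], and set a = m − ν. With χ(r) = 1 + ((a − b/2)/(a + b/2))·r^{−2a} and f(r) = r^{a}·e^{−b·r²/4}, there exist constants C > 0 and b₀ > 0 such that for all 0 < b < b₀: | ∫₁^∞ χ(r)²·f(r)²·r dr − 2^{a}·Γ(a+1)·b^{−(a+1)} | ≤ C/b, where Γ denotes the Gamma function. -/
open MeasureTheory Real Set

/-! With `c = (a - b/2)/(a + b/2) ∈ [0, 1]` the integrand equals
`r^(2a+1) e^(-b r²/2) + (2c + c² r^(-2a)) · r e^(-b r²/2)`. Over `(0, ∞)` the first term is a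
Gamma integral with value `2^a Γ(a+1) b^(-(a+1))`, and its part over `(0, 1]` lies in `[-1, 1]`.
On `r > 1` the weight `2c + c² r^(-2a)` lies in `[0, 3]` and `∫ r e^(-b r²/2) = 1/b`, so the
second term contributes at most `3/b`. -/

lemma integral_rpow_mul_exp_neg_half_mul_sq {a b : ℝ} (ha : -1 < a) (hb : 0 < b) :
    ∫ x in Ioi (0 : ℝ), x ^ (2 * a + 1) * exp (-(b / 2) * x ^ 2)
      = 2 ^ a * Gamma (a + 1) * b ^ (-(a + 1)) := by
  have h := integral_rpow_mul_exp_neg_mul_rpow two_pos (by linarith : -1 < 2 * a + 1)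
    (half_pos hb)
  simp_rw [rpow_two] at h
  rw [h, show -(2 * a + 1 + 1) / 2 = -(a + 1) by ring, show (2 * a + 1 + 1) / 2 = a + 1 by ring,
    div_rpow hb.le zero_le_two, rpow_neg zero_le_two, rpow_add_one two_ne_zero]
  field_simp

lemma integral_mul_exp_neg_half_mul_sq {b : ℝ} (hb : 0 < b) :
    ∫ x in Ioi (0 : ℝ), x * exp (-(b / 2) * x ^ 2) = b⁻¹ := by
  simpa [rpow_neg_one] using integral_rpow_mul_exp_neg_half_mul_sq (a := 0) (by norm_num) hb

lemma abs_setIntegral_Ioc_zero_one_rpow_mul_exp_neg_mul_sq_le {s b : ℝ} (hs : 0 ≤ s)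
    (hb : 0 ≤ b) : |∫ x in Ioc (0 : ℝ) 1, x ^ s * exp (-b * x ^ 2)| ≤ 1 := by
  have h := norm_setIntegral_le_of_norm_le_const (μ := volume) (C := 1)
    (f := fun x : ℝ ↦ x ^ s * exp (-b * x ^ 2)) measure_Ioc_lt_top fun x hx ↦ by
      have hexp : exp (-b * x ^ 2) ≤ 1 := exp_le_one_iff.2 (by nlinarith [sq_nonneg x])
      rw [norm_of_nonneg (mul_nonneg (rpow_nonneg hx.1.le _) (exp_pos _).le)]
      exact mul_le_one₀ (rpow_le_one hx.1.le hx.2 hs) (exp_pos _).le hexp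
  simpa [Real.volume_real_Ioc] using h

section QuasiMode

variable {a b c : ℝ}

lemma quasiMode_integrand_eq {r : ℝ} (hr : 0 < r) :
    (1 + c * r ^ (-(2 * a))) ^ 2 * (r ^ a * exp (-b * r ^ 2 / 4)) ^ 2 * r
      = r ^ (2 * a + 1) * exp (-(b / 2) * r ^ 2)
        + (2 * c + c ^ 2 * r ^ (-(2 * a))) * (r * exp (-(b / 2) * r ^ 2)) := by
  have hexp : exp (-b * r ^ 2 / 4) ^ 2 = exp (-(b / 2) * r ^ 2) := by
    rw [← exp_nat_mul]; ring_nf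
  have hsq : (r ^ a) ^ 2 = r ^ (2 * a) := by
    rw [← rpow_natCast, ← rpow_mul hr.le]; ring_nf
  have hinv : r ^ (-(2 * a)) * r ^ (2 * a) = 1 := by
    rw [← rpow_add hr]; simp
  rw [mul_pow, hexp, hsq, rpow_add_one hr.ne']
  linear_combination (2 * c + c ^ 2 * r ^ (-(2 * a))) * r * exp (-(b / 2) * r ^ 2) * hinv

lemma quasiMode_weight_mem_Icc (ha : 0 ≤ a) (hc : c ∈ Icc (0 : ℝ) 1) {r : ℝ} (hr : 1 ≤ r) :
    2 * c + c ^ 2 * r ^ (-(2 * a)) ∈ Icc (0 : ℝ) 3 := by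
  have hpow : r ^ (-(2 * a)) ∈ Icc (0 : ℝ) 1 :=
    ⟨by positivity, rpow_le_one_of_one_le_of_nonpos hr (by linarith)⟩
  obtain ⟨hc0, hc1⟩ := hc
  constructor
  · positivity
  · nlinarith [mul_le_mul hc1 hc1 hc0 zero_le_one, hpow.1, hpow.2, sq_nonneg c]

lemma quasiMode_correction_integrableOn_and_mem_Icc (ha : 0 ≤ a) (hb : 0 < b)
    (hc : c ∈ Icc (0 : ℝ) 1) :
    IntegrableOn (fun r ↦ (2 * c + c ^ 2 * r ^ (-(2 * a))) * (r * exp (-(b / 2) * r ^ 2)))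
        (Ioi 1) ∧
      ∫ r in Ioi (1 : ℝ), (2 * c + c ^ 2 * r ^ (-(2 * a))) * (r * exp (-(b / 2) * r ^ 2))
        ∈ Icc 0 (3 / b) := by
  have hg : IntegrableOn (fun r : ℝ ↦ r * exp (-(b / 2) * r ^ 2)) (Ioi 0) := by
    simpa using integrableOn_rpow_mul_exp_neg_mul_sq (s := 1) (half_pos hb) (by norm_num)
  have hg_nonneg : ∀ r ∈ Ioi (0 : ℝ), 0 ≤ r * exp (-(b / 2) * r ^ 2) := fun r hr ↦
    mul_nonneg (le_of_lt hr) (exp_pos _).le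
  have hw : ∀ r ∈ Ioi (1 : ℝ), 2 * c + c ^ 2 * r ^ (-(2 * a)) ∈ Icc (0 : ℝ) 3 := fun r hr ↦
    quasiMode_weight_mem_Icc ha hc (le_of_lt hr)
  have hsub : Ioi (1 : ℝ) ⊆ Ioi 0 := Ioi_subset_Ioi zero_le_one
  have hbound : ∀ r ∈ Ioi (1 : ℝ),
      (2 * c + c ^ 2 * r ^ (-(2 * a))) * (r * exp (-(b / 2) * r ^ 2))
        ≤ 3 * (r * exp (-(b / 2) * r ^ 2)) := fun r hr ↦
    mul_le_mul_of_nonneg_right (hw r hr).2 (hg_nonneg r (hsub hr))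
  have hint : IntegrableOn
      (fun r ↦ (2 * c + c ^ 2 * r ^ (-(2 * a))) * (r * exp (-(b / 2) * r ^ 2))) (Ioi 1) := by
    refine Integrable.mono' ((hg.mono_set hsub).const_mul 3) (by fun_prop) ?_
    filter_upwards [ae_restrict_mem measurableSet_Ioi] with r hr
    rw [norm_of_nonneg (mul_nonneg (hw r hr).1 (hg_nonneg r (hsub hr)))]
    exact hbound r hr
  refine ⟨hint, setIntegral_nonneg measurableSet_Ioi fun r hr ↦
    mul_nonneg (hw r hr).1 (hg_nonneg r (hsub hr)), ?_⟩
  calc _ ≤ ∫ r in Ioi (1 : ℝ), 3 * (r * exp (-(b / 2) * r ^ 2)) :=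
        setIntegral_mono_on hint ((hg.mono_set hsub).const_mul 3) measurableSet_Ioi hbound
    _ ≤ ∫ r in Ioi (0 : ℝ), 3 * (r * exp (-(b / 2) * r ^ 2)) :=
        setIntegral_mono_set (hg.const_mul 3)
          ((ae_restrict_mem measurableSet_Ioi).mono fun r hr ↦
            mul_nonneg zero_le_three (hg_nonneg r hr))
          hsub.eventuallyLE
    _ = 3 / b := by
        rw [integral_const_mul, integral_mul_exp_neg_half_mul_sq hb, div_eq_mul_inv]

lemma abs_setIntegral_quasiMode_sq_sub_le (ha : 0 ≤ a) (hb : 0 < b) (hb1 : b ≤ 1)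
    (hc : c ∈ Icc (0 : ℝ) 1) :
    |(∫ r in Ioi (1 : ℝ), (1 + c * r ^ (-(2 * a))) ^ 2 * (r ^ a * exp (-b * r ^ 2 / 4)) ^ 2 * r)
      - 2 ^ a * Gamma (a + 1) * b ^ (-(a + 1))| ≤ 4 / b := by
  set g : ℝ → ℝ := fun r ↦ r ^ (2 * a + 1) * exp (-(b / 2) * r ^ 2)
  set h : ℝ → ℝ := fun r ↦ (2 * c + c ^ 2 * r ^ (-(2 * a))) * (r * exp (-(b / 2) * r ^ 2))
  have hg : IntegrableOn g (Ioi 0) :=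
    integrableOn_rpow_mul_exp_neg_mul_sq (half_pos hb) (by linarith)
  obtain ⟨hh, hh_mem⟩ := quasiMode_correction_integrableOn_and_mem_Icc ha hb hc
  have hhead : |∫ r in Ioc (0 : ℝ) 1, g r| ≤ 1 := by
    simpa [g, neg_div] using
      abs_setIntegral_Ioc_zero_one_rpow_mul_exp_neg_mul_sq_le (by linarith : 0 ≤ 2 * a + 1)
        (half_pos hb).le
  have hsplit :
      ∫ r in Ioi (0 : ℝ), g r = (∫ r in Ioc (0 : ℝ) 1, g r) + ∫ r in Ioi (1 : ℝ), g r := by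
    rw [← setIntegral_union (Ioc_disjoint_Ioi le_rfl) measurableSet_Ioi
      (hg.mono_set Ioc_subset_Ioi_self) (hg.mono_set (Ioi_subset_Ioi zero_le_one)),
      Ioc_union_Ioi_eq_Ioi zero_le_one]
  have hF : ∫ r in Ioi (1 : ℝ),
        (1 + c * r ^ (-(2 * a))) ^ 2 * (r ^ a * exp (-b * r ^ 2 / 4)) ^ 2 * r
      = (∫ r in Ioi (1 : ℝ), g r) + ∫ r in Ioi (1 : ℝ), h r := by
    rw [← integral_add (hg.mono_set (Ioi_subset_Ioi zero_le_one)) hh]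
    exact setIntegral_congr_fun measurableSet_Ioi fun r hr ↦
      quasiMode_integrand_eq (zero_lt_one.trans hr)
  rw [hF, ← integral_rpow_mul_exp_neg_half_mul_sq (by linarith) hb]
  have h1b : 1 ≤ 1 / b := by rw [le_div_iff₀ hb]; linarith
  have h4 : 4 / b = 3 / b + 1 / b := by ring
  rw [hsplit, abs_le]
  rw [abs_le] at hhead
  constructor <;> linarith [hh_mem.1, hh_mem.2]

end QuasiMode

/-- Norm asymptotics of the quasi-mode as `b → 0⁺`: with `a = m − ν`, `m ≥ 1`,
`‖Ψ‖² = ∫₁^∞ χ(r)² f(r)² r dr = 2^a Γ(a+1) b^{−(a+1)} + O(1/b)`. -/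
theorem quasi_mode_norm_asymptotics
    (m : ℤ) (hm : 1 ≤ m) (ν : ℝ) (hν : ν ∈ Set.Ioc (-(1:ℝ)/2) (1/2))
    (a : ℝ) (ha : a = (m : ℝ) - ν) :
    ∃ C > (0:ℝ), ∃ b₀ > (0:ℝ), ∀ b : ℝ, 0 < b → b < b₀ →
      |(∫ r in Set.Ioi (1:ℝ),
          (1 + (a - b / 2) / (a + b / 2) * r ^ (-(2 * a))) ^ 2 *
            (r ^ a * Real.exp (-b * r ^ 2 / 4)) ^ 2 * r)
        - (2:ℝ) ^ a * Real.Gamma (a + 1) * b ^ (-(a + 1))| ≤ C / b := by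
  have ha0 : 0 < a := by
    have : (1 : ℝ) ≤ m := by exact_mod_cast hm
    linarith [hν.2]
  refine ⟨4, by norm_num, min 1 a, by positivity, fun b hb hbb ↦ ?_⟩
  have hb1 : b < 1 := hbb.trans_le (min_le_left _ _)
  have hba : b < a := hbb.trans_le (min_le_right _ _)
  have hden : 0 < a + b / 2 := by linarith
  exact abs_setIntegral_quasiMode_sq_sub_le ha0.le hb hb1.le
    ⟨div_nonneg (by linarith) hden.le, (div_le_one hden).2 (by linarith)⟩
end

section
/- (Asymptotic inversion of an e₀-sequence, Remark 1.3) Let α > 0 and A, ν, e₀ ∈ ℝ. Let (b_n) be a sequence of positive real numbers such that b_n → +∞ and b_n/2 + α·√(b_n) + A + ν − n → e₀ as n → ∞. Then b_n − 2n + 2·√2·α·√n → 2·(α² − A + e₀ − ν) as n → ∞. -/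
open Filter

/-- Asymptotic inversion of an `e₀`-sequence (Remark 1.3): if `b_n → ∞` and
`b_n/2 + α√(b_n) + A + ν − n → e₀`, then
`b_n − 2n + 2√2·α·√n → 2(α² − A + e₀ − ν)`. -/
theorem e0_sequence_inversion
    (α : ℝ) (hα : 0 < α) (A ν e₀ : ℝ) (b : ℕ → ℝ)
    (hb : ∀ n, 0 < b n)
    (htop : Tendsto b atTop atTop)
    (h : Tendsto (fun n : ℕ => b n / 2 + α * Real.sqrt (b n) + A + ν - (n : ℝ))
      atTop (nhds e₀)) :
    Tendsto (fun n : ℕ => b n - 2 * (n : ℝ) + 2 * Real.sqrt 2 * α * Real.sqrt (n : ℝ))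
      atTop (nhds (2 * (α ^ 2 - A + e₀ - ν))) := by
  set d : ℕ → ℝ := fun n => b n / 2 + α * Real.sqrt (b n) + A + ν - (n : ℝ) with hd
  set f : ℕ → ℝ := fun n => Real.sqrt (b n) + α with hf
  set g : ℕ → ℝ := fun n => Real.sqrt (2 * (n : ℝ)) with hg
  have hfpos : ∀ n, 0 < f n := fun n => by
    have := Real.sqrt_nonneg (b n); simp only [hf]; linarith
  have hgnn : ∀ n, 0 ≤ g n := fun n => Real.sqrt_nonneg _
  -- g → ∞
  have hgtop : Tendsto g atTop atTop := by
    apply tendsto_atTop_atTop.2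
    intro C
    refine ⟨Nat.ceil (C ^ 2), fun n hn => ?_⟩
    have h1 : (C : ℝ) ^ 2 ≤ (n : ℝ) :=
      le_trans (Nat.le_ceil _) (by exact_mod_cast hn)
    have h2 : (C : ℝ) ^ 2 ≤ 2 * (n : ℝ) := by nlinarith [h1, (Nat.cast_nonneg n : (0:ℝ) ≤ (n:ℝ))]
    calc C ≤ |C| := le_abs_self C
      _ = Real.sqrt (C ^ 2) := (Real.sqrt_sq_eq_abs C).symm
      _ ≤ g n := Real.sqrt_le_sqrt h2
  have hfgtop : Tendsto (fun n => f n + g n) atTop atTop :=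
    tendsto_atTop_mono (fun n => le_add_of_nonneg_left (hfpos n).le) hgtop
  -- numerator converges
  have hnum : Tendsto (fun n => 2 * (d n - A - ν) + α ^ 2) atTop
      (nhds (2 * (e₀ - A - ν) + α ^ 2)) := by
    have := ((h.sub_const A).sub_const ν).const_mul 2
    exact this.add_const (α ^ 2)
  -- f n - g n = num / (f n + g n)
  have hkey : ∀ n, f n - g n = (2 * (d n - A - ν) + α ^ 2) / (f n + g n) := by
    intro n
    have hpos : 0 < f n + g n := lt_of_lt_of_le (hfpos n) (le_add_of_nonneg_right (hgnn n))
    rw [eq_div_iff hpos.ne']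
    have h1 : Real.sqrt (b n) ^ 2 = b n := Real.sq_sqrt (hb n).le
    have h2 : Real.sqrt (2 * (n : ℝ)) ^ 2 = 2 * (n : ℝ) :=
      Real.sq_sqrt (by positivity)
    simp only [hf, hg, hd]
    nlinarith [h1, h2]
  have hdiff : Tendsto (fun n => f n - g n) atTop (nhds 0) := by
    simp only [funext hkey]
    exact hnum.div_atTop hfgtop
  -- combine
  have hmain : Tendsto (fun n => 2 * (d n - A - ν) + 2 * α ^ 2 - 2 * α * (f n - g n))
      atTop (nhds (2 * (e₀ - A - ν) + 2 * α ^ 2 - 2 * α * 0)) := by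
    exact ((((h.sub_const A).sub_const ν).const_mul 2).add_const (2 * α ^ 2)).sub
      (hdiff.const_mul (2 * α))
  have heq : (fun n : ℕ => b n - 2 * (n : ℝ) + 2 * Real.sqrt 2 * α * Real.sqrt (n : ℝ))
      = fun n => 2 * (d n - A - ν) + 2 * α ^ 2 - 2 * α * (f n - g n) := by
    funext n
    have hsq : Real.sqrt (2 * (n : ℝ)) = Real.sqrt 2 * Real.sqrt (n : ℝ) :=
      Real.sqrt_mul (by norm_num) _
    simp only [hf, hg, hd, hsq]
    ring
  rw [heq]
  convert hmain using 2
  ring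
end

section
/- (Derivative formula for the confluent hypergeometric function of the second kind) For every a > 0, c ∈ ℝ and z > 0, the map z ↦ U(a, c, z) is differentiable at z and ∂U/∂z (a, c, z) = −a·U(a+1, c+1, z). -/
/-!
Differentiate under the integral sign. For `w` within `z / 2` of `z`, the bound
`t ≤ ε⁻¹ e^{εt}` dominates the `w`-derivative `-t e^{-wt} g(t)` of the integrand by
`(4/z) e^{-zt/4} |g(t)|`, where `g(t) = t^{a-1} (1+t)^{c-a-1}`; such Laplace integrands are
integrable because `(1+t)^r ≤ 2^p (1 + t^p)` with `p = max r 0` reduces them to Gamma integrals.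
The extra factor `t` turns `t^{a-1}` into `t^{(a+1)-1}`, and `Γ(a+1) = a Γ(a)` yields the `-a`.
-/

open MeasureTheory

/-- The confluent hypergeometric function of the second kind, defined for `a > 0`, `z > 0`
by its integral representation `U(a,c,z) = (1/Γ(a))·∫₀^∞ e^{−zt} t^{a−1} (1+t)^{c−a−1} dt`. -/
noncomputable def hypergeometricU (a c z : ℝ) : ℝ :=
  (1 / Real.Gamma a) *
    ∫ t in Set.Ioi (0:ℝ), Real.exp (-z * t) * t ^ (a - 1) * (1 + t) ^ (c - a - 1)

open Real Set Filter

theorem Real.add_rpow_le_two_rpow_mul_rpow_add_rpow {a b p : ℝ} (ha : 0 ≤ a) (hb : 0 ≤ b)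
    (hp : 0 ≤ p) : (a + b) ^ p ≤ 2 ^ p * (a ^ p + b ^ p) := by
  have hmax : max a b ^ p ≤ a ^ p + b ^ p := by
    rcases max_choice a b with h | h <;> rw [h]
    · linarith [rpow_nonneg hb p]
    · linarith [rpow_nonneg ha p]
  calc (a + b) ^ p ≤ (2 * max a b) ^ p := by
        gcongr; rw [two_mul]; exact add_le_add (le_max_left a b) (le_max_right a b)
    _ = 2 ^ p * max a b ^ p := mul_rpow zero_le_two (le_max_of_le_left ha)
    _ ≤ 2 ^ p * (a ^ p + b ^ p) := by gcongr

theorem integrableOn_exp_neg_mul_mul_rpow_mul_one_add_rpow {b s : ℝ} (hb : 0 < b) (hs : 0 < s)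
    (r : ℝ) :
    IntegrableOn (fun t => exp (-s * t) * (t ^ (b - 1) * (1 + t) ^ r)) (Ioi 0) := by
  set p := max r 0
  have hp : 0 ≤ p := le_max_right r 0
  have hGamma : ∀ q : ℝ, -1 < q →
      IntegrableOn (fun t : ℝ => t ^ q * exp (-s * t)) (Ioi 0) := by
    intro q hq
    simpa only [rpow_one] using integrableOn_rpow_mul_exp_neg_mul_rpow hq zero_lt_one hs
  have hbound : IntegrableOn
      (fun t : ℝ => 2 ^ p * (t ^ (b - 1) * exp (-s * t) + t ^ (b - 1 + p) * exp (-s * t)))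
      (Ioi 0) :=
    ((hGamma _ (by linarith)).add (hGamma _ (by linarith))).const_mul _
  refine hbound.mono' (by fun_prop) ?_
  filter_upwards [ae_restrict_mem measurableSet_Ioi] with t (ht : 0 < t)
  have hpow : (1 + t) ^ r ≤ 2 ^ p * (1 + t ^ p) := calc
    (1 + t) ^ r ≤ (1 + t) ^ p := rpow_le_rpow_of_exponent_le (by linarith) (le_max_left r 0)
    _ ≤ 2 ^ p * (1 ^ p + t ^ p) := add_rpow_le_two_rpow_mul_rpow_add_rpow zero_le_one ht.le hp
    _ = 2 ^ p * (1 + t ^ p) := by rw [one_rpow]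
  rw [norm_of_nonneg (by positivity), rpow_add ht]
  calc exp (-s * t) * (t ^ (b - 1) * (1 + t) ^ r)
      ≤ exp (-s * t) * (t ^ (b - 1) * (2 ^ p * (1 + t ^ p))) := by gcongr
    _ = _ := by ring

theorem mul_exp_neg_mul_le {ε : ℝ} (hε : 0 < ε) (w t : ℝ) :
    t * exp (-w * t) ≤ ε⁻¹ * exp (-(w - ε) * t) := by
  have ht : t ≤ ε⁻¹ * exp (ε * t) := by
    rw [le_inv_mul_iff₀ hε]
    linarith [add_one_le_exp (ε * t)]
  calc t * exp (-w * t) ≤ ε⁻¹ * exp (ε * t) * exp (-w * t) := by gcongr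
    _ = ε⁻¹ * exp (-(w - ε) * t) := by rw [mul_assoc, ← exp_add]; ring_nf

theorem hasDerivAt_integral_exp_neg_mul_smul {E : Type*} [NormedAddCommGroup E]
    [NormedSpace ℝ E] [CompleteSpace E] {g : ℝ → E}
    (hg : ∀ w > 0, IntegrableOn (fun t => exp (-w * t) • g t) (Ioi 0)) {s : ℝ} (hs : 0 < s) :
    HasDerivAt (fun w => ∫ t in Ioi 0, exp (-w * t) • g t)
      (∫ t in Ioi 0, (-t * exp (-s * t)) • g t) s := by
  refine (hasDerivAt_integral_of_dominated_loc_of_deriv_le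
    (F' := fun w t => (-t * exp (-w * t)) • g t) (Metric.ball_mem_nhds s (half_pos hs))
    ((eventually_gt_nhds hs).mono fun w hw => (hg w hw).aestronglyMeasurable) (hg s hs) ?_ ?_
    ((hg (s / 4) (by positivity)).norm.const_mul (s / 4)⁻¹) ?_).2
  · simp_rw [mul_smul]
    exact continuous_neg.aestronglyMeasurable.smul (hg s hs).aestronglyMeasurable
  · filter_upwards [ae_restrict_mem measurableSet_Ioi] with t (ht : 0 < t) w hw
    rw [Metric.mem_ball, dist_eq, abs_lt] at hw
    have hexp : t * exp (-w * t) ≤ (s / 4)⁻¹ * exp (-(s / 4) * t) := calc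
      t * exp (-w * t) ≤ (s / 4)⁻¹ * exp (-(w - s / 4) * t) :=
        mul_exp_neg_mul_le (by positivity) w t
      _ ≤ (s / 4)⁻¹ * exp (-(s / 4) * t) := by gcongr; nlinarith
    simp only [norm_smul, norm_mul, norm_neg, norm_of_nonneg ht.le, norm_of_nonneg (exp_pos _).le]
    rw [← mul_assoc]
    gcongr
  · refine ae_of_all _ fun t w _ => ?_
    convert (((hasDerivAt_neg w).mul_const t).exp).smul_const (g t) using 2
    ring

/-- Derivative formula for the confluent hypergeometric function of the second kind:
for `a > 0` and `z > 0`, `∂U/∂z(a,c,z) = −a·U(a+1,c+1,z)`. -/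
theorem hypergeometricU_hasDerivAt
    (a c z : ℝ) (ha : 0 < a) (hz : 0 < z) :
    HasDerivAt (fun w : ℝ => hypergeometricU a c w)
      (-a * hypergeometricU (a + 1) (c + 1) z) z := by
  set g : ℝ → ℝ := fun t => t ^ (a - 1) * (1 + t) ^ (c - a - 1)
  have hU : (fun w => hypergeometricU a c w)
      = fun w => (1 / Gamma a) * ∫ t in Ioi 0, exp (-w * t) • g t := by
    funext w
    simp only [hypergeometricU, g, smul_eq_mul, mul_assoc]
  have hderiv := (hasDerivAt_integral_exp_neg_mul_smul (g := g)
    (fun w hw => integrableOn_exp_neg_mul_mul_rpow_mul_one_add_rpow ha hw (c - a - 1)) hz).const_mul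
    (1 / Gamma a)
  rw [hU]
  refine hderiv.congr_deriv ?_
  have hintegral : ∫ t in Ioi 0, (-t * exp (-z * t)) • g t
      = -∫ t in Ioi 0, exp (-z * t) * t ^ (a + 1 - 1) * (1 + t) ^ (c + 1 - (a + 1) - 1) := by
    rw [← integral_neg]
    refine setIntegral_congr_fun measurableSet_Ioi fun t (ht : 0 < t) => ?_
    have hpow : t ^ (a + 1 - 1) = t ^ (a - 1) * t := by
      rw [← rpow_add_one ht.ne']; ring_nf
    simp only [g, smul_eq_mul, hpow, show c + 1 - (a + 1) - 1 = c - a - 1 by ring]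
    ring
  rw [hintegral, hypergeometricU, Gamma_add_one ha.ne']
  field_simp
end

section
/- (Explicit fiber eigenfunctions via the confluent hypergeometric function) Let b > 0, k ∈ ℝ and λ < b, and set a = 1/2 − λ/(2b) > 0. Define v(r) = e^{−b·r²/4}·r^{k}·U(a, k+1, b·r²/2) for r > 0. Then v is twice differentiable on (0,∞) and satisfies −v''(r) − v'(r)/r + (k/r − b·r/2)²·v(r) = λ·v(r) for all r > 0. -/
/-!
Differentiating under the integral sign gives `∂_z U(a,c,z) = -a·U(a+1,c+1,z)`, and integrating
`d/dt [e^{-zt} t^a (1+t)^{c-a}]` over `(0,∞)` gives a three-term relation between the integrals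
with parameters `a`, `a+1`, `a+2`, which is Kummer's equation `z U'' + (c - z) U' - a U = 0`.
For any solution `u` of Kummer's equation with `c = k + 1`, the gauge transformation
`v(r) = e^{-br²/4} r^k u(br²/2)` solves the fiber equation with `λ = b (1 - 2a)`.
-/

open MeasureTheory

open Real Set Filter Topology

noncomputable def kummerIntegrand (a p z t : ℝ) : ℝ := exp (-z * t) * t ^ (a - 1) * (1 + t) ^ p

noncomputable def kummerIntegral (a p z : ℝ) : ℝ := ∫ t in Ioi 0, kummerIntegrand a p z t

lemma continuousOn_kummerIntegrand (a p z : ℝ) :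
    ContinuousOn (kummerIntegrand a p z) (Ioi 0) := by
  intro t (ht : 0 < t)
  have h₁ : 0 < 1 + t := by positivity
  exact (((continuous_exp.comp (continuous_const.mul continuous_id)).continuousAt.mul
    (continuousAt_rpow_const _ _ (.inl ht.ne'))).mul
    ((continuousAt_rpow_const _ _ (.inl h₁.ne')).comp
      (continuous_const.add continuous_id).continuousAt)).continuousWithinAt

lemma tendsto_kummerIntegrand_atTop (a p : ℝ) {z : ℝ} (hz : 0 < z) :
    Tendsto (kummerIntegrand a p z) atTop (𝓝 0) := by
  have h₁ := tendsto_rpow_mul_exp_neg_mul_atTop_nhds_zero (a - 1) (z / 2) (half_pos hz)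
  have h₂ := (tendsto_rpow_mul_exp_neg_mul_atTop_nhds_zero p (z / 2) (half_pos hz)).comp
    (tendsto_atTop_add_const_left _ 1 tendsto_id)
  have h := (h₁.mul h₂).mul_const (exp (z / 2))
  rw [zero_mul, zero_mul] at h
  refine h.congr fun t => ?_
  rw [kummerIntegrand, show -z * t = -(z / 2) * t + -(z / 2) * (1 + t) + z / 2 by ring, exp_add,
    exp_add]
  simp only [Function.comp, id]
  ring

lemma integrableOn_kummerIntegrand_Ioc {a : ℝ} (p z : ℝ) (ha : 0 < a) (hz : 0 ≤ z) :
    IntegrableOn (kummerIntegrand a p z) (Ioc 0 1) := by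
  have hdom : IntegrableOn (fun t : ℝ => 2 ^ |p| * t ^ (a - 1)) (Ioc 0 1) := by
    refine Integrable.const_mul (?_ : IntegrableOn (fun t : ℝ => t ^ (a - 1)) (Ioc 0 1)) _
    rw [← intervalIntegrable_iff_integrableOn_Ioc_of_le zero_le_one]
    exact intervalIntegral.intervalIntegrable_rpow' (by linarith)
  refine hdom.mono'
    (((continuousOn_kummerIntegrand a p z).mono Ioc_subset_Ioi_self).aestronglyMeasurable
      measurableSet_Ioc) ((ae_restrict_iff' measurableSet_Ioc).2 (.of_forall ?_))
  rintro t ⟨ht₀, ht₁⟩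
  have hexp : exp (-z * t) ≤ 1 := exp_le_one_iff.2 (by nlinarith)
  have hpow : (1 + t) ^ p ≤ 2 ^ |p| :=
    calc (1 + t) ^ p ≤ (1 + t) ^ |p| := rpow_le_rpow_of_exponent_le (by linarith) (le_abs_self p)
      _ ≤ 2 ^ |p| := rpow_le_rpow (by linarith) (by linarith) (abs_nonneg p)
  rw [kummerIntegrand, norm_of_nonneg (by positivity), mul_comm (2 ^ |p|)]
  calc exp (-z * t) * t ^ (a - 1) * (1 + t) ^ p ≤ 1 * t ^ (a - 1) * 2 ^ |p| := by gcongr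
    _ = t ^ (a - 1) * 2 ^ |p| := by rw [one_mul]

lemma integrableOn_kummerIntegrand_Ioi_one (a p : ℝ) {z : ℝ} (hz : 0 < z) :
    IntegrableOn (kummerIntegrand a p z) (Ioi 1) := by
  refine integrable_of_isBigO_exp_neg (half_pos hz)
    ((continuousOn_kummerIntegrand a p z).mono fun t (ht : 1 ≤ t) => one_pos.trans_le ht) ?_
  refine Asymptotics.isBigO_of_div_tendsto_nhds (.of_forall fun t h => absurd h (exp_ne_zero _)) 0
    ((tendsto_kummerIntegrand_atTop a p (half_pos hz)).congr fun t => ?_)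
  rw [Pi.div_apply, eq_div_iff (exp_ne_zero _), kummerIntegrand, kummerIntegrand,
    show -z * t = -(z / 2) * t + -(z / 2) * t by ring, exp_add]
  ring

lemma integrableOn_kummerIntegrand {a : ℝ} (p : ℝ) {z : ℝ} (ha : 0 < a) (hz : 0 < z) :
    IntegrableOn (kummerIntegrand a p z) (Ioi 0) := by
  rw [← Ioc_union_Ioi_eq_Ioi zero_le_one]
  exact (integrableOn_kummerIntegrand_Ioc p z ha hz.le).union
    (integrableOn_kummerIntegrand_Ioi_one a p hz)

lemma hasDerivAt_kummerIntegral {a : ℝ} (p : ℝ) {z : ℝ} (ha : 0 < a) (hz : 0 < z) :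
    HasDerivAt (kummerIntegral a p) (-kummerIntegral (a + 1) p z) z := by
  have hderiv : ∀ t ∈ Ioi (0 : ℝ), ∀ x, HasDerivAt (fun x => kummerIntegrand a p x t)
      (-kummerIntegrand (a + 1) p x t) x := fun t (ht : 0 < t) x => by
    have h := ((((hasDerivAt_id x).neg.mul_const t).exp).mul_const (t ^ (a - 1))).mul_const
      ((1 + t) ^ p)
    refine h.congr_deriv ?_
    rw [kummerIntegrand, add_sub_cancel_right, rpow_sub_one ht.ne']
    simp only [Pi.neg_apply, id]
    field_simp
  -- on the ball of radius `z/2` around `z` the `x`-derivative is dominated by its value at `z/2`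
  have hbound : ∀ t ∈ Ioi (0 : ℝ), ∀ x ∈ Metric.ball z (z / 2),
      ‖-kummerIntegrand (a + 1) p x t‖ ≤ kummerIntegrand (a + 1) p (z / 2) t := by
    intro t (ht : 0 < t) x hx
    have hx : z / 2 < x := by
      rw [Metric.mem_ball, Real.dist_eq, abs_lt] at hx
      linarith
    rw [norm_neg, kummerIntegrand, kummerIntegrand, norm_of_nonneg (by positivity)]
    gcongr
  have key := hasDerivAt_integral_of_dominated_loc_of_deriv_le (μ := volume.restrict (Ioi 0))
    (Metric.ball_mem_nhds z (half_pos hz))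
    (.of_forall fun x =>
      (continuousOn_kummerIntegrand a p x).aestronglyMeasurable measurableSet_Ioi)
    (integrableOn_kummerIntegrand p ha hz)
    ((continuousOn_kummerIntegrand (a + 1) p z).aestronglyMeasurable measurableSet_Ioi).neg
    ((ae_restrict_iff' measurableSet_Ioi).2 (.of_forall hbound))
    (integrableOn_kummerIntegrand p (by linarith) (half_pos hz))
    ((ae_restrict_iff' measurableSet_Ioi).2 (.of_forall fun t ht x _ => hderiv t ht x))
  rw [integral_neg] at key
  exact key.2

lemma hasDerivAt_kummerIntegrand_succ (a p z : ℝ) {t : ℝ} (ht : 0 < t) :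
    HasDerivAt (kummerIntegrand (a + 1) (p + 1) z)
      (-z * kummerIntegrand (a + 2) p z t + (a + p + 1 - z) * kummerIntegrand (a + 1) p z t
        + a * kummerIntegrand a p z t) t := by
  have h₁ : 0 < 1 + t := by positivity
  have hexp : HasDerivAt (fun t => exp (-z * t)) (exp (-z * t) * -z) t := by
    simpa using ((hasDerivAt_id t).const_mul (-z)).exp
  have hpow : HasDerivAt (fun t => t ^ (a + 1 - 1)) ((a + 1 - 1) * t ^ (a + 1 - 1 - 1)) t :=
    hasDerivAt_rpow_const (.inl ht.ne')
  have hpow' := ((hasDerivAt_id t).const_add 1).rpow_const (p := p + 1) (.inl h₁.ne')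
  refine ((hexp.mul hpow).mul hpow').congr_deriv ?_
  simp only [kummerIntegrand, Pi.mul_apply, id, add_sub_cancel_right,
    show a + 2 - 1 = a + 1 by ring, rpow_add_one ht.ne', rpow_add_one h₁.ne', rpow_sub_one ht.ne']
  field_simp
  ring

lemma kummerIntegral_recurrence {a : ℝ} (p : ℝ) {z : ℝ} (ha : 0 < a) (hz : 0 < z) :
    -z * kummerIntegral (a + 2) p z + (a + p + 1 - z) * kummerIntegral (a + 1) p z
      + a * kummerIntegral a p z = 0 := by
  have hint₂ := (integrableOn_kummerIntegrand p (by linarith : 0 < a + 2) hz).const_mul (-z)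
  have hint₁ := (integrableOn_kummerIntegrand p (by linarith : 0 < a + 1) hz).const_mul
    (a + p + 1 - z)
  have hint₀ := (integrableOn_kummerIntegrand p ha hz).const_mul a
  have hcont : ContinuousWithinAt (kummerIntegrand (a + 1) (p + 1) z) (Ici 0) 0 :=
    (((continuous_exp.comp (continuous_const.mul continuous_id)).continuousAt.mul
      (continuousAt_rpow_const _ _ (.inr (by linarith)))).mul
      ((continuousAt_rpow_const _ _ (.inl (by norm_num))).comp
        (continuous_const.add continuous_id).continuousAt)).continuousWithinAt
  have hzero : kummerIntegrand (a + 1) (p + 1) z 0 = 0 := by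
    simp [kummerIntegrand, zero_rpow ha.ne']
  -- the boundary terms of `∫₀^∞ d/dt [e^{-zt} t^a (1+t)^{p+1}] dt` vanish
  have hftc := integral_Ioi_of_hasDerivAt_of_tendsto hcont
    (fun t ht => hasDerivAt_kummerIntegrand_succ a p z ht) ((hint₂.add hint₁).add hint₀)
    (tendsto_kummerIntegrand_atTop _ _ hz)
  rw [hzero, sub_zero, integral_add (by exact hint₂.add hint₁) hint₀, integral_add hint₂ hint₁]
    at hftc
  simpa only [integral_const_mul, kummerIntegral] using hftc

lemma hasDerivAt_deriv_of_eventually_hasDerivAt {f f' : ℝ → ℝ} {f'' x : ℝ}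
    (hf : ∀ᶠ y in 𝓝 x, HasDerivAt f (f' y) y) (hf' : HasDerivAt f' f'' x) :
    HasDerivAt (deriv f) f'' x :=
  hf'.congr_of_eventuallyEq (hf.mono fun _ hy => hy.deriv)

lemma hypergeometricU_eq_kummerIntegral (a c z : ℝ) :
    hypergeometricU a c z = (Gamma a)⁻¹ * kummerIntegral a (c - a - 1) z := by
  rw [hypergeometricU, one_div]
  rfl

lemma hasDerivAt_hypergeometricU {a : ℝ} (c : ℝ) {z : ℝ} (ha : 0 < a) (hz : 0 < z) :
    HasDerivAt (hypergeometricU a c) (-a * hypergeometricU (a + 1) (c + 1) z) z := by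
  have h := (hasDerivAt_kummerIntegral (c - a - 1) ha hz).const_mul (Gamma a)⁻¹
  rw [← funext (hypergeometricU_eq_kummerIntegral a c)] at h
  refine h.congr_deriv ?_
  rw [hypergeometricU_eq_kummerIntegral, Gamma_add_one ha.ne',
    show c + 1 - (a + 1) - 1 = c - a - 1 by ring]
  have := (Gamma_pos_of_pos ha).ne'
  field_simp

lemma hasDerivAt_deriv_hypergeometricU {a : ℝ} (c : ℝ) {z : ℝ} (ha : 0 < a) (hz : 0 < z) :
    HasDerivAt (deriv (hypergeometricU a c))
      (a * (a + 1) * hypergeometricU (a + 2) (c + 2) z) z := by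
  refine hasDerivAt_deriv_of_eventually_hasDerivAt
    (eventually_of_mem (Ioi_mem_nhds hz) fun y hy => hasDerivAt_hypergeometricU c ha hy) ?_
  refine ((hasDerivAt_hypergeometricU (c + 1) (by linarith : 0 < a + 1) hz).const_mul
    (-a)).congr_deriv ?_
  rw [show a + 1 + 1 = a + 2 by ring, show c + 1 + 1 = c + 2 by ring]
  ring

theorem hypergeometricU_kummer_ode {a : ℝ} (c : ℝ) {z : ℝ} (ha : 0 < a) (hz : 0 < z) :
    z * deriv (deriv (hypergeometricU a c)) z + (c - z) * deriv (hypergeometricU a c) z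
      - a * hypergeometricU a c z = 0 := by
  rw [(hasDerivAt_deriv_hypergeometricU c ha hz).deriv, (hasDerivAt_hypergeometricU c ha hz).deriv]
  have hrec := kummerIntegral_recurrence (c - a - 1) ha hz
  have hΓ : Gamma (a + 2) = (a + 1) * (a * Gamma a) := by
    rw [show a + 2 = a + 1 + 1 by ring, Gamma_add_one (by linarith), Gamma_add_one ha.ne']
  simp only [hypergeometricU_eq_kummerIntegral, show c + 2 - (a + 2) - 1 = c - a - 1 by ring,
    show c + 1 - (a + 1) - 1 = c - a - 1 by ring, hΓ, Gamma_add_one ha.ne']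
  have := (Gamma_pos_of_pos ha).ne'
  field_simp
  linear_combination -hrec

lemma hasDerivAt_gaussian_mul_rpow (b k : ℝ) {r : ℝ} (hr : 0 < r) :
    HasDerivAt (fun r => exp (-b * r ^ 2 / 4) * r ^ k)
      (exp (-b * r ^ 2 / 4) * r ^ k * (k / r - b * r / 2)) r := by
  have hexp : HasDerivAt (fun r => exp (-b * r ^ 2 / 4))
      (exp (-b * r ^ 2 / 4) * (-b * r / 2)) r := by
    refine (((hasDerivAt_pow 2 r).const_mul (-b)).div_const 4).exp.congr_deriv ?_
    ring
  refine (hexp.mul (hasDerivAt_rpow_const (.inl hr.ne'))).congr_deriv ?_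
  rw [rpow_sub_one hr.ne']
  field_simp
  ring

lemma hasDerivAt_half_mul_sq (b r : ℝ) : HasDerivAt (fun r => b * r ^ 2 / 2) (b * r) r := by
  refine (((hasDerivAt_pow 2 r).const_mul b).div_const 2).congr_deriv ?_
  ring

noncomputable def fiberFunction (b k : ℝ) (u : ℝ → ℝ) (r : ℝ) : ℝ :=
  exp (-b * r ^ 2 / 4) * r ^ k * u (b * r ^ 2 / 2)

section FiberFunction

variable {b k : ℝ} {u : ℝ → ℝ} {r : ℝ}

lemma hasDerivAt_fiberFunction {u' : ℝ} (hu : HasDerivAt u u' (b * r ^ 2 / 2)) (hr : 0 < r) :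
    HasDerivAt (fiberFunction b k u) (exp (-b * r ^ 2 / 4) * r ^ k *
      ((k / r - b * r / 2) * u (b * r ^ 2 / 2) + b * r * u')) r := by
  refine ((hasDerivAt_gaussian_mul_rpow b k hr).mul
    (hu.comp r (hasDerivAt_half_mul_sq b r))).congr_deriv ?_
  rw [Function.comp_apply]
  ring

lemma hasDerivAt_deriv_fiberFunction (hb : 0 < b) {u' : ℝ → ℝ} {u'' : ℝ}
    (hu : ∀ z > 0, HasDerivAt u (u' z) z) (hu' : HasDerivAt u' u'' (b * r ^ 2 / 2))
    (hr : 0 < r) :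
    HasDerivAt (deriv (fiberFunction b k u)) (exp (-b * r ^ 2 / 4) * r ^ k *
      (((k / r - b * r / 2) ^ 2 - k / r ^ 2 - b / 2) * u (b * r ^ 2 / 2)
        + (2 * (k / r - b * r / 2) * b * r + b) * u' (b * r ^ 2 / 2) + (b * r) ^ 2 * u'')) r := by
  refine hasDerivAt_deriv_of_eventually_hasDerivAt (eventually_of_mem (Ioi_mem_nhds hr)
    fun s (hs : 0 < s) => hasDerivAt_fiberFunction (hu _ (by positivity)) hs) ?_
  have hφ : HasDerivAt (fun r => k / r - b * r / 2) (-k / r ^ 2 - b / 2) r := by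
    refine (((hasDerivAt_inv hr.ne').const_mul k).sub
      (((hasDerivAt_id r).const_mul b).div_const 2)).congr_deriv ?_
    field_simp
  have hm := hasDerivAt_half_mul_sq b r
  have h := (hasDerivAt_gaussian_mul_rpow b k hr).mul
    ((hφ.mul ((hu _ (by positivity)).comp r hm)).add
      (((hasDerivAt_id r).const_mul b).mul (hu'.comp r hm)))
  refine h.congr_deriv ?_
  simp only [Pi.add_apply, Pi.mul_apply, Function.comp_apply, id]
  field_simp
  ring

theorem fiberFunction_ode {a : ℝ} (hb : 0 < b) (hu : ∀ z > 0, DifferentiableAt ℝ u z)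
    (hu' : ∀ z > 0, DifferentiableAt ℝ (deriv u) z)
    (hkummer : ∀ z > 0, z * deriv (deriv u) z + (k + 1 - z) * deriv u z - a * u z = 0) :
    (∀ r > (0:ℝ), DifferentiableAt ℝ (fiberFunction b k u) r) ∧
    (∀ r > (0:ℝ), DifferentiableAt ℝ (deriv (fiberFunction b k u)) r) ∧
    (∀ r > (0:ℝ), -(deriv (deriv (fiberFunction b k u)) r) - deriv (fiberFunction b k u) r / r
      + (k / r - b * r / 2) ^ 2 * fiberFunction b k u r
        = b * (1 - 2 * a) * fiberFunction b k u r) := by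
  have h₁ : ∀ r > (0:ℝ), HasDerivAt (fiberFunction b k u) _ r := fun r hr =>
    hasDerivAt_fiberFunction (hu _ (by positivity)).hasDerivAt hr
  have h₂ : ∀ r > (0:ℝ), HasDerivAt (deriv (fiberFunction b k u)) _ r := fun r hr =>
    hasDerivAt_deriv_fiberFunction hb (fun z hz => (hu z hz).hasDerivAt)
      (hu' _ (by positivity)).hasDerivAt hr
  refine ⟨fun r hr => (h₁ r hr).differentiableAt, fun r hr => (h₂ r hr).differentiableAt,
    fun r hr => ?_⟩
  rw [(h₂ r hr).deriv, (h₁ r hr).deriv, fiberFunction]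
  linear_combination (norm := skip)
    (-2 * b * exp (-b * r ^ 2 / 4) * r ^ k) * hkummer _ (by positivity : 0 < b * r ^ 2 / 2)
  field_simp
  ring

end FiberFunction

/-- Explicit fiber eigenfunctions via the confluent hypergeometric function: with
`a = 1/2 − λ/(2b) > 0`, the function `v(r) = e^{−br²/4} r^k U(a, k+1, br²/2)` is twice
differentiable on `(0,∞)` and satisfies the fiber ODE at energy `λ`. -/
theorem fiber_eigenfunction_via_U
    (b : ℝ) (hb : 0 < b) (k lam : ℝ) (hlam : lam < b)
    (a : ℝ) (ha : a = 1 / 2 - lam / (2 * b))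
    (v : ℝ → ℝ)
    (hv : ∀ r, v r = Real.exp (-b * r ^ 2 / 4) * r ^ k * hypergeometricU a (k + 1) (b * r ^ 2 / 2)) :
    (∀ r > (0:ℝ), DifferentiableAt ℝ v r) ∧
    (∀ r > (0:ℝ), DifferentiableAt ℝ (deriv v) r) ∧
    (∀ r > (0:ℝ),
      -(deriv (deriv v) r) - deriv v r / r + (k / r - b * r / 2) ^ 2 * v r = lam * v r) := by
  obtain rfl : v = fiberFunction b k (hypergeometricU a (k + 1)) := funext hv
  have ha₀ : 0 < a := by
    rw [ha, sub_pos, div_lt_iff₀ (by positivity)]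
    linarith
  have hlam_eq : lam = b * (1 - 2 * a) := by
    rw [ha]
    field_simp
    ring
  rw [hlam_eq]
  exact fiberFunction_ode hb
    (fun z hz => (hasDerivAt_hypergeometricU _ ha₀ hz).differentiableAt)
    (fun z hz => (hasDerivAt_deriv_hypergeometricU _ ha₀ hz).differentiableAt)
    (fun z hz => hypergeometricU_kummer_ode _ ha₀ hz)
end

section
/- (Integration-by-parts step in the crossing derivative computation) For every real number k > 0, one has ∫₁^∞ k·(r² − 1)·r^{2k+1}·e^{−k·r²} dr = ∫₁^∞ ( k + 1 − k/r² )·r^{2k+1}·e^{−k·r²} dr, and this common value is strictly greater than ∫₁^∞ r^{2k+1}·e^{−k·r²} dr. -/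
/-!
The difference of the two integrands is the derivative of
`F r = (r² - 1) r^{2k} e^{-k r²} / 2`, which vanishes at `r = 1` and at infinity, so the two
integrals agree. The second integrand exceeds `r^{2k+1} e^{-k r²}` by
`k (1 - 1/r²) r^{2k+1} e^{-k r²}`, which is positive on `(1, ∞)`.
-/

open MeasureTheory Real Set Filter Topology

lemma setIntegral_lt_setIntegral_of_forall_lt {α : Type*} [MeasurableSpace α] {μ : Measure α}
    {s : Set α} {f g : α → ℝ} (hs : MeasurableSet s) (hμs : μ s ≠ 0)
    (hf : IntegrableOn f s μ) (hg : IntegrableOn g s μ) (hfg : ∀ x ∈ s, f x < g x) :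
    ∫ x in s, f x ∂μ < ∫ x in s, g x ∂μ := by
  have hpos : 0 < ∫ x in s, (g - f) x ∂μ := by
    rw [setIntegral_pos_iff_support_of_nonneg_ae _ (hg.sub hf)]
    · refine (pos_iff_ne_zero.2 hμs).trans_le (measure_mono fun x hx => ⟨?_, hx⟩)
      exact (sub_pos.2 (hfg x hx)).ne'
    · filter_upwards [ae_restrict_mem hs] with x hx using (sub_pos.2 (hfg x hx)).le
  rwa [integral_sub' hg hf, sub_pos] at hpos

lemma setIntegral_Ioi_eq_of_hasDerivAt_sub {f g F : ℝ → ℝ} {a : ℝ}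
    (hF : ∀ x ∈ Ici a, HasDerivAt F (f x - g x) x) (hFa : F a = 0)
    (hF_top : Tendsto F atTop (𝓝 0)) (hf : IntegrableOn f (Ioi a))
    (hg : IntegrableOn g (Ioi a)) :
    ∫ x in Ioi a, f x = ∫ x in Ioi a, g x := by
  have h := integral_Ioi_of_hasDerivAt_of_tendsto' hF (hf.sub hg) hF_top
  rwa [integral_sub hf hg, hFa, sub_zero, sub_eq_zero] at h

lemma integrableOn_Ioi_rpow_mul_exp_neg_mul_sq {k a s : ℝ} (hk : 0 < k) (ha : 0 ≤ a)
    (hs : -1 < s) : IntegrableOn (fun r : ℝ => r ^ s * exp (-k * r ^ 2)) (Ioi a) :=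
  (integrableOn_rpow_mul_exp_neg_mul_sq hk hs).mono_set (Ioi_subset_Ioi ha)

lemma tendsto_rpow_mul_exp_neg_mul_sq_atTop_nhds_zero {k : ℝ} (hk : 0 < k) (s : ℝ) :
    Tendsto (fun r : ℝ => r ^ s * exp (-k * r ^ 2)) atTop (𝓝 0) := by
  refine ((tendsto_rpow_mul_exp_neg_mul_atTop_nhds_zero (s / 2) k hk).comp
    (tendsto_pow_atTop two_ne_zero)).congr' ?_
  filter_upwards [eventually_gt_atTop 0] with r hr
  rw [Function.comp_apply, ← rpow_natCast, ← rpow_mul hr.le, Nat.cast_ofNat,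
    mul_div_cancel₀ s two_ne_zero]

section Crossing

variable {k : ℝ}

lemma integrableOn_crossing_lhs (hk : 0 < k) :
    IntegrableOn (fun r : ℝ => k * (r ^ 2 - 1) * r ^ (2 * k + 1) * exp (-k * r ^ 2))
      (Ioi 1) := by
  have hint := ((integrableOn_Ioi_rpow_mul_exp_neg_mul_sq (s := 2 * k + 1 + (2 : ℕ)) hk
      zero_le_one (by push_cast; linarith)).sub
    (integrableOn_Ioi_rpow_mul_exp_neg_mul_sq (s := 2 * k + 1) hk zero_le_one
      (by linarith))).const_mul k
  refine IntegrableOn.congr_fun hint (fun r hr => ?_) measurableSet_Ioi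
  simp only [Pi.sub_apply]
  rw [rpow_add_natCast (zero_lt_one.trans hr).ne']
  ring

lemma integrableOn_crossing_rhs (hk : 0 < k) :
    IntegrableOn (fun r : ℝ => (k + 1 - k / r ^ 2) * r ^ (2 * k + 1) * exp (-k * r ^ 2))
      (Ioi 1) := by
  have hint := ((integrableOn_Ioi_rpow_mul_exp_neg_mul_sq (s := 2 * k + 1) hk zero_le_one
      (by linarith)).const_mul (k + 1)).sub
    ((integrableOn_Ioi_rpow_mul_exp_neg_mul_sq (s := 2 * k + 1 - (2 : ℕ)) hk zero_le_one
      (by push_cast; linarith)).const_mul k)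
  refine IntegrableOn.congr_fun hint (fun r hr => ?_) measurableSet_Ioi
  simp only [Pi.sub_apply]
  rw [rpow_sub_natCast (zero_lt_one.trans hr).ne']
  ring

lemma hasDerivAt_crossing_boundary {r : ℝ} (hr : 0 < r) :
    HasDerivAt (fun r : ℝ => (r ^ 2 - 1) * r ^ (2 * k) * exp (-k * r ^ 2) / 2)
      ((k + 1 - k / r ^ 2) * r ^ (2 * k + 1) * exp (-k * r ^ 2)
        - k * (r ^ 2 - 1) * r ^ (2 * k + 1) * exp (-k * r ^ 2)) r := by
  have hpoly := ((hasDerivAt_pow 2 r).sub_const 1).mul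
    (hasDerivAt_rpow_const (p := 2 * k) (Or.inl hr.ne'))
  have hexp := ((hasDerivAt_pow 2 r).const_mul (-k)).exp
  refine ((hpoly.mul hexp).div_const 2).congr_deriv ?_
  simp only [Pi.mul_apply]
  rw [rpow_add_one hr.ne', rpow_sub_one hr.ne']
  field_simp
  ring

lemma tendsto_crossing_boundary_atTop (hk : 0 < k) :
    Tendsto (fun r : ℝ => (r ^ 2 - 1) * r ^ (2 * k) * exp (-k * r ^ 2) / 2) atTop (𝓝 0) := by
  have h := ((tendsto_rpow_mul_exp_neg_mul_sq_atTop_nhds_zero hk (2 * k + (2 : ℕ))).sub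
    (tendsto_rpow_mul_exp_neg_mul_sq_atTop_nhds_zero hk (2 * k))).div_const 2
  rw [sub_zero, zero_div] at h
  refine h.congr' ?_
  filter_upwards [eventually_gt_atTop 0] with r hr
  rw [rpow_add_natCast hr.ne']
  ring

end Crossing

/-- Integration-by-parts step in the crossing derivative computation: for `k > 0`,
`∫₁^∞ k(r²−1) r^{2k+1} e^{−kr²} dr = ∫₁^∞ (k+1 − k/r²) r^{2k+1} e^{−kr²} dr`, and this
common value is strictly greater than `∫₁^∞ r^{2k+1} e^{−kr²} dr`. -/
theorem crossing_integration_by_parts (k : ℝ) (hk : 0 < k) :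
    (∫ r in Set.Ioi (1:ℝ), k * (r ^ 2 - 1) * r ^ (2 * k + 1) * Real.exp (-k * r ^ 2))
      = (∫ r in Set.Ioi (1:ℝ),
          (k + 1 - k / r ^ 2) * r ^ (2 * k + 1) * Real.exp (-k * r ^ 2)) ∧
    (∫ r in Set.Ioi (1:ℝ), r ^ (2 * k + 1) * Real.exp (-k * r ^ 2))
      < ∫ r in Set.Ioi (1:ℝ), k * (r ^ 2 - 1) * r ^ (2 * k + 1) * Real.exp (-k * r ^ 2) := by
  have hparts := (setIntegral_Ioi_eq_of_hasDerivAt_sub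
    (fun r hr => hasDerivAt_crossing_boundary (zero_lt_one.trans_le hr)) (by simp)
    (tendsto_crossing_boundary_atTop hk) (integrableOn_crossing_rhs hk)
    (integrableOn_crossing_lhs hk)).symm
  refine ⟨hparts, hparts ▸ setIntegral_lt_setIntegral_of_forall_lt measurableSet_Ioi (by simp)
    (integrableOn_Ioi_rpow_mul_exp_neg_mul_sq hk zero_le_one (by linarith))
    (integrableOn_crossing_rhs hk) fun r (hr : 1 < r) => ?_⟩
  have hk_lt : k / r ^ 2 < k := div_lt_self hk (one_lt_pow₀ hr two_ne_zero)
  rw [mul_assoc]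
  exact lt_mul_of_one_lt_left (by positivity) (by linarith)
end
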